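/- arXiv:2211.03724 — 7 statements merged into one kernel-verified Lean document; each statement's English description precedes it below -/
import Mathlib

section
/- Let A be a free ℤ[τ,τ^{-1}]-module with basis {b_x} indexed by a partially ordered set X such that the intervals {y : y ≤ x} are finite, and let d : A → A be a ℤ-linear involution satisfying d(τ a) = τ^{-1} d(a) and d(b_x) = b_x + Σ_{y < x} r_{y,x} b_y for some r_{y,x} ∈ ℤ[τ,τ^{-1}]. Then for each x ∈ X there exists a unique element u_x ∈ A fixed by d of the form u_x = b_x + Σ_{y < x} h_{y,x} b_y with all h_{y,x} ∈ τℤ[τ]. -/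
/-!
Existence: starting from `b_x`, correct the defect `e = d a - a` one point at a time. As `d` is an
involution, `d e = -e`; at a maximal point `m` of the support of `e` triangularity gives
`(d e) m = invert (e m)`, so `invert (e m) = -e m` and hence `e m = h - invert h` with
`h = posPart (e m) ∈ τℤ[τ]`. Adding `h • b_m` to `a` kills the defect at `m` and creates new defect
only below `m`, so the (finite) lower closure of the support of the defect shrinks.

Uniqueness: a nonzero `d`-fixed element with all coefficients in `τℤ[τ]` has, at a maximal point of
its support, a coefficient `p` with `invert p = p`, which forces `p = 0`.
-/
namespace LaurentPolynomial

open Polynomial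

variable {R : Type*} [CommRing R]

lemma coeff_T_mul (m n : ℤ) (f : R[T;T⁻¹]) : (T m * f).coeff n = f.coeff (n - m) := by
  rw [T, AddMonoidAlgebra.coeff_single_mul_apply, one_mul]
  congr 1; omega

lemma mem_range_toLaurent_iff {f : R[T;T⁻¹]} :
    f ∈ Set.range toLaurent ↔ ∀ n < 0, f.coeff n = 0 := by
  have h := Finsupp.mem_range_mapDomain_iff Nat.castEmbedding Nat.castEmbedding.injective f.coeff
  simp only [Set.mem_range] at h ⊢
  constructor
  · rintro ⟨q, rfl⟩ n hn
    exact h.1 ⟨q.toFinsupp.coeff, rfl⟩ n (by rintro ⟨k, rfl⟩; simp at hn; omega)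
  · intro hf
    obtain ⟨c, hc⟩ := h.2 fun n hn => hf n (by contrapose! hn; lift n to ℕ using hn; exact ⟨n, rfl⟩)
    exact ⟨⟨⟨c⟩⟩, by ext n; exact congrArg (· n) hc⟩

/-- `τR[τ]` inside `R[τ, τ⁻¹]`, with `τ = T 1`. -/
def posSupported : AddSubgroup R[T;T⁻¹] where
  carrier := {p | ∀ n ≤ 0, p.coeff n = 0}
  add_mem' {p q} hp hq n hn := by simp [AddMonoidAlgebra.coeff_add, hp n hn, hq n hn]
  zero_mem' _ _ := rfl
  neg_mem' {p} hp n hn := by simp [AddMonoidAlgebra.coeff_neg, hp n hn]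

lemma mem_posSupported_iff_exists {p : R[T;T⁻¹]} :
    p ∈ posSupported ↔ ∃ q : R[X], p = T 1 * q.toLaurent := by
  have hp : p = T 1 * (T (-1) * p) := by rw [← mul_assoc, ← T_add]; simp
  calc p ∈ posSupported ↔ T (-1) * p ∈ Set.range toLaurent := by
        rw [mem_range_toLaurent_iff]
        simp only [coeff_T_mul]
        exact ⟨fun h n hn => h _ (by omega), fun h n hn => by simpa using h (n - 1) (by omega)⟩
    _ ↔ ∃ q : R[X], p = T 1 * q.toLaurent := by
        refine exists_congr fun q => ⟨fun h => ?_, fun h => ?_⟩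
        · rw [hp, h]
        · rw [h, ← mul_assoc, ← T_add]; simp

lemma eq_zero_of_mem_posSupported_of_invert_mem {p : R[T;T⁻¹]} (hp : p ∈ posSupported)
    (hp' : invert p ∈ posSupported) : p = 0 := by
  ext n
  rcases le_or_gt n 0 with hn | hn
  · exact hp n hn
  · simpa using hp' (-n) (by omega)

def posPart (s : R[T;T⁻¹]) : R[T;T⁻¹] := ⟨s.coeff.filter (0 < ·)⟩

lemma posPart_mem (s : R[T;T⁻¹]) : posPart s ∈ posSupported := fun n hn => by
  simp [posPart, not_lt.2 hn]

lemma posPart_sub_invert_posPart [IsAddTorsionFree R] {s : R[T;T⁻¹]} (hs : invert s = -s) :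
    posPart s - invert (posPart s) = s := by
  have hneg (n : ℤ) : s.coeff (-n) = -s.coeff n := by
    simpa using congrArg (·.coeff n) hs
  ext n
  rcases lt_trichotomy n 0 with hn | rfl | hn
  · simp [posPart, hn, hn.not_gt, hneg]
  · simpa [posPart, self_eq_neg, eq_comm] using hneg 0
  · simp [posPart, hn, hn.not_gt]

lemma map_smul_eq_invert_smul {M N : Type*} [AddCommGroup M] [Module ℤ[T;T⁻¹] M]
    [AddCommGroup N] [Module ℤ[T;T⁻¹] N] (f : M →+ N)
    (hf : ∀ a, f ((T 1 : ℤ[T;T⁻¹]) • a) = (T (-1) : ℤ[T;T⁻¹]) • f a) (p : ℤ[T;T⁻¹]) (a : M) :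
    f (p • a) = invert p • f a := by
  let P (p : ℤ[T;T⁻¹]) : Prop := ∀ a, f (p • a) = invert p • f a
  have hmul {p q} (hp : P p) (hq : P q) : P (p * q) := fun a => by
    rw [mul_smul, hp, hq, ← mul_smul, map_mul]
  have hT_one : P (T 1) := fun a => by rw [hf, invert_T]
  have hT_neg_one : P (T (-1)) := fun a => by
    have h := congrArg ((T 1 : ℤ[T;T⁻¹]) • ·) (hf ((T (-1) : ℤ[T;T⁻¹]) • a))
    rw [smul_smul, ← T_add, smul_smul, ← T_add, add_neg_cancel, T_zero, one_smul, one_smul] at h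
    rw [invert_T, neg_neg, h]
  have hT (n : ℤ) : P (T n) := by
    induction n using Int.induction_on with
    | zero => intro a; rw [T_zero, map_one, one_smul, one_smul]
    | succ k ih => rw [T_add]; exact hmul ih hT_one
    | pred k ih => rw [sub_eq_add_neg, T_add]; exact hmul ih hT_neg_one
  have hC (c : ℤ) : P (C c) := fun a => by
    rw [eq_intCast, map_intCast, Int.cast_smul_eq_zsmul, Int.cast_smul_eq_zsmul, map_zsmul]
  revert a
  induction p using LaurentPolynomial.induction_on' with
  | add p q hp hq => intro a; rw [add_smul, map_add, hp, hq, map_add, add_smul]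
  | C_mul_T n c => exact hmul (hC c) (hT n)

end LaurentPolynomial

open LaurentPolynomial Finsupp

lemma lowerClosure_lt_of_subset_union_Iic {X : Type*} [PartialOrder X] {s t : Set X} {m : X}
    (hm : Maximal (· ∈ s) m) (hmt : m ∉ t) (hts : t ⊆ s ∪ Set.Iic m) :
    lowerClosure t < lowerClosure s := by
  refine lt_of_le_of_ne (lowerClosure_le.2 fun z hz => ?_) fun h => ?_
  · rcases hts hz with hz | hz
    · exact subset_lowerClosure hz
    · exact mem_lowerClosure.2 ⟨m, hm.prop, hz⟩
  · obtain ⟨z, hz, hmz⟩ := mem_lowerClosure.1 (h ▸ subset_lowerClosure hm.prop : m ∈ lowerClosure t)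
    rcases hts hz with hzs | hzm
    · exact hmt (hm.eq_of_ge hzs hmz ▸ hz)
    · exact hmt (le_antisymm hzm hmz ▸ hz)

lemma finite_lowerClosure_of_finite_Iic {X : Type*} [PartialOrder X]
    (hfin : ∀ x : X, {y | y ≤ x}.Finite) {s : Set X} (hs : s.Finite) :
    (lowerClosure s : Set X).Finite := by
  rw [coe_lowerClosure]
  exact hs.biUnion fun x _ => hfin x

lemma sub_single_apply_mem_posSupported {X : Type*} [PartialOrder X] {x : X}
    {u : X →₀ ℤ[T;T⁻¹]} (hu_x : u x = 1) (hu_le : ∀ y, u y ≠ 0 → y ≤ x)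
    (hu_pos : ∀ y, y < x → u y ∈ posSupported) (y : X) :
    (u - single x 1 : X →₀ ℤ[T;T⁻¹]) y ∈ posSupported := by
  rcases eq_or_ne y x with rfl | hne
  · simp [hu_x]
  rw [Finsupp.sub_apply, single_eq_of_ne hne, sub_zero]
  by_cases hyx : y < x
  · exact hu_pos y hyx
  · rw [by_contra fun h => hyx ((hu_le y h).lt_of_ne hne)]
    exact zero_mem _

namespace KazhdanLusztig

variable {X : Type*} [PartialOrder X] {d : (X →₀ ℤ[T;T⁻¹]) →+ (X →₀ ℤ[T;T⁻¹])}
  (hdτ : ∀ a, d ((T 1 : ℤ[T;T⁻¹]) • a) = (T (-1) : ℤ[T;T⁻¹]) • d a)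
  (htri : ∀ x y : X, (d (single x 1) - single x 1 : X →₀ ℤ[T;T⁻¹]) y ≠ 0 → y < x)
include hdτ htri

lemma map_single_apply_of_not_lt {y z : X} (hyz : ¬ y < z) (p : ℤ[T;T⁻¹]) :
    d (single z p) y = single z (invert p) y := by
  have hsingle : single z p = p • single z (1 : ℤ[T;T⁻¹]) := by
    rw [smul_single, smul_eq_mul, mul_one]
  have hr : (d (single z 1) - single z 1 : X →₀ ℤ[T;T⁻¹]) y = 0 := by
    by_contra h
    exact hyz (htri z y h)
  rw [hsingle, map_smul_eq_invert_smul d hdτ, Finsupp.smul_apply,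
    ← sub_add_cancel (d (single z 1)) (single z 1), Finsupp.add_apply, hr, zero_add,
    ← Finsupp.smul_apply, smul_single, smul_eq_mul, mul_one]

lemma le_of_map_single_apply_ne_zero {y z : X} {p : ℤ[T;T⁻¹]} (h : d (single z p) y ≠ 0) :
    y ≤ z := by
  by_contra hyz
  rw [map_single_apply_of_not_lt hdτ htri (fun h => hyz h.le),
    single_eq_of_ne (fun h => hyz h.le)] at h
  exact h rfl

lemma map_apply_of_maximal {a : X →₀ ℤ[T;T⁻¹]} {y : X} (hy : ∀ z, a z ≠ 0 → ¬ y < z) :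
    d a y = invert (a y) := by
  conv_lhs => rw [← a.sum_single]
  rw [map_finsuppSum, Finsupp.sum_apply]
  calc a.sum (fun z p => d (single z p) y) = a.sum (fun z p => single z (invert p) y) :=
        Finsupp.sum_congr fun z hz =>
          map_single_apply_of_not_lt hdτ htri (hy z (mem_support_iff.1 hz)) _
    _ = invert (a y) := by
        refine (Finset.sum_eq_single y (fun z _ hzy => single_eq_of_ne hzy.symm) fun hy => ?_).trans
          single_eq_same
        rw [notMem_support_iff.1 hy, map_zero, single_zero, Finsupp.coe_zero, Pi.zero_apply]

lemma eq_zero_of_map_eq_self {w : X →₀ ℤ[T;T⁻¹]} (hw : d w = w)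
    (hpos : ∀ y, w y ∈ posSupported) : w = 0 := by
  by_contra hne
  obtain ⟨m, hm⟩ := Finset.exists_maximal (support_nonempty_iff.2 hne)
  have hfix : invert (w m) = w m := by
    rw [← map_apply_of_maximal hdτ htri fun z hz => hm.not_gt (mem_support_iff.2 hz), hw]
  exact mem_support_iff.1 hm.prop
    (eq_zero_of_mem_posSupported_of_invert_mem (hpos m) (by rw [hfix]; exact hpos m))

lemma lowerClosure_support_lt_of_sub_invert {a : X →₀ ℤ[T;T⁻¹]} {m : X}
    (hm : Maximal (· ∈ (d a - a).support) m) {h : ℤ[T;T⁻¹]} (hh : h - invert h = (d a - a) m) :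
    lowerClosure (↑(d (a + single m h) - (a + single m h)).support : Set X) <
      lowerClosure ↑(d a - a).support := by
  have he : d (a + single m h) - (a + single m h) = (d a - a) + (d (single m h) - single m h) := by
    rw [map_add]; abel
  rw [he]
  refine lowerClosure_lt_of_subset_union_Iic hm ?_ fun y hy => ?_
  · rw [Finset.mem_coe, Finsupp.notMem_support_iff, Finsupp.add_apply,
      Finsupp.sub_apply (d (single m h)), map_single_apply_of_not_lt hdτ htri (lt_irrefl m),
      single_eq_same, single_eq_same, ← hh]
    ring
  · by_contra hy'
    simp only [Set.mem_union, Finset.mem_coe, mem_support_iff, not_or, not_not,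
      Set.mem_Iic] at hy hy'
    have hdy : d (single m h) y = 0 := by
      by_contra hne
      exact hy'.2 (le_of_map_single_apply_ne_zero hdτ htri hne)
    rw [Finsupp.add_apply, hy'.1, Finsupp.sub_apply, hdy,
      single_eq_of_ne (fun hym : y = m => hy'.2 hym.le)] at hy
    exact hy (by ring)

lemma exists_map_add_eq_self (hfin : ∀ x : X, {y | y ≤ x}.Finite) (hdinv : ∀ a, d (d a) = a)
    (a : X →₀ ℤ[T;T⁻¹]) :
    ∃ c : X →₀ ℤ[T;T⁻¹], (∀ y, c y ∈ posSupported) ∧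
      (c.support : Set X) ⊆ ↑(lowerClosure (↑(d a - a).support : Set X)) ∧ d (a + c) = a + c := by
  induction hn : (lowerClosure (↑(d a - a).support : Set X) : Set X).ncard
    using Nat.strong_induction_on generalizing a with
  | _ n ih =>
  by_cases he : d a - a = 0
  · exact ⟨0, fun _ => zero_mem _, by simp, by rwa [add_zero, ← sub_eq_zero]⟩
  obtain ⟨m, hm⟩ := Finset.exists_maximal (support_nonempty_iff.2 he)
  have hanti : invert ((d a - a) m) = -(d a - a) m := by
    rw [← map_apply_of_maximal hdτ htri fun z hz => hm.not_gt (mem_support_iff.2 hz), map_sub,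
      hdinv, ← neg_sub, Finsupp.neg_apply]
  have hlt := lowerClosure_support_lt_of_sub_invert hdτ htri hm
    (posPart_sub_invert_posPart hanti)
  have hfinite := finite_lowerClosure_of_finite_Iic hfin (d a - a).support.finite_toSet
  obtain ⟨c, hc_pos, hc_supp, hc_fix⟩ :=
    ih _ (hn ▸ Set.ncard_lt_ncard (LowerSet.coe_ssubset_coe.2 hlt) hfinite) _ rfl
  refine ⟨single m (posPart ((d a - a) m)) + c, fun y => add_mem ?_ (hc_pos y), ?_, ?_⟩
  · classical
    rw [single_apply]
    split_ifs
    exacts [posPart_mem _, zero_mem _]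
  · classical
    intro y hy
    rcases Finset.mem_union.1 (support_add hy) with hy | hy
    · rw [Finset.mem_singleton.1 (support_single_subset hy)]
      exact subset_lowerClosure hm.prop
    · exact hlt.le (hc_supp hy)
  · rwa [← add_assoc]

end KazhdanLusztig

open KazhdanLusztig

/-- abstract Kazhdan–Lusztig lemma: Let A be the free ℤ[τ,τ⁻¹]-module on a
poset X whose lower intervals are finite, and d : A → A a ℤ-linear involution with
d(τa) = τ⁻¹ d(a) and d(b_x) = b_x + Σ_{y<x} r_{y,x} b_y.  Then for each x there is a
unique d-fixed element u_x = b_x + Σ_{y<x} h_{y,x} b_y with all h_{y,x} ∈ τℤ[τ]. -/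
theorem stmt_6 (X : Type*) [PartialOrder X]
    (hfin : ∀ x : X, {y | y ≤ x}.Finite)
    (d : (X →₀ LaurentPolynomial ℤ) →+ (X →₀ LaurentPolynomial ℤ))
    (hdinv : ∀ a, d (d a) = a)
    (hdτ : ∀ a, d ((LaurentPolynomial.T 1 : LaurentPolynomial ℤ) • a) = (LaurentPolynomial.T (-1) : LaurentPolynomial ℤ) • d a)
    (htri : ∀ x y : X, ((d (Finsupp.single x 1) - Finsupp.single x 1 : X →₀ LaurentPolynomial ℤ) y ≠ 0) → y < x) :
    ∀ x : X, ∃! u : X →₀ LaurentPolynomial ℤ,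
      d u = u ∧ u x = 1 ∧ (∀ y, u y ≠ 0 → y ≤ x) ∧
      (∀ y, y < x → ∃ q : Polynomial ℤ, u y = (LaurentPolynomial.T 1 : LaurentPolynomial ℤ) * q.toLaurent) := by
  intro x
  simp only [← mem_posSupported_iff_exists]
  obtain ⟨c, hc_pos, hc_supp, hc_fix⟩ := exists_map_add_eq_self hdτ htri hfin hdinv (single x 1)
  have hc_lt (y : X) (hy : c y ≠ 0) : y < x := by
    obtain ⟨z, hz, hyz⟩ := mem_lowerClosure.1 (hc_supp (Finsupp.mem_support_iff.2 hy))
    exact hyz.trans_lt (htri x z (Finsupp.mem_support_iff.1 hz))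
  have hc_x : c x = 0 := by_contra fun h => lt_irrefl x (hc_lt x h)
  refine ⟨single x 1 + c, ⟨hc_fix, ?_, fun y hy => ?_, fun y hy => ?_⟩, ?_⟩
  · rw [Finsupp.add_apply, single_eq_same, hc_x, add_zero]
  · by_contra hyx
    refine hy ?_
    rw [Finsupp.add_apply, single_eq_of_ne fun h => hyx h.le, zero_add]
    exact by_contra fun h => hyx (hc_lt y h).le
  · rw [Finsupp.add_apply, single_eq_of_ne hy.ne, zero_add]
    exact hc_pos y
  · rintro u ⟨hu_fix, hu_x, hu_le, hu_pos⟩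
    rw [← sub_eq_zero, ← sub_sub]
    exact eq_zero_of_map_eq_self hdτ htri (by rw [sub_sub, map_sub, hu_fix, hc_fix])
      fun y => sub_mem (sub_single_apply_mem_posSupported hu_x hu_le hu_pos y) (hc_pos y)
end

section
/- For the PGL₂ root datum 𝔇 = (ℤǎ, ǎ, ½ℤa, a) with ⟨ǎ, a⟩ = 2, and the primitive twist given by the quadratic form Q with Q(ǎ) = 1 and the positive integer n, one has n(ǎ) = n, and the (Q,n)-twisted root datum satisfies: 𝔇_{(Q,n)} = (nℤǎ, nǎ, (1/2n)ℤa, (1/n)a) ≅ 𝔇 if n is odd, and 𝔇_{(Q,n)} = ((n/2)ℤǎ, nǎ, (1/n)ℤa, (1/n)a) ≅ 𝔇^∨ if n is even, where 𝔇^∨ = (½ℤa, a, ℤǎ, ǎ) is the Langlands dual root datum. -/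
open AddSubgroup

/-- A rank-one root datum realized inside ℚ, with the pairing ⟨y, x⟩ = 2·y·x. -/
structure RootDatumQ where
  Y : AddSubgroup ℚ
  coroot : ℚ
  corootMem : coroot ∈ Y
  X : AddSubgroup ℚ
  root : ℚ
  rootMem : root ∈ X

/-- Isomorphism of such rank-one root data: group isomorphisms of the two lattices
matching the marked coroot and root and compatible with the pairings. -/
def RootDatumQ.Iso (D D' : RootDatumQ) : Prop :=
  ∃ (f : D.Y ≃+ D'.Y) (g : D.X ≃+ D'.X),
    (f ⟨D.coroot, D.corootMem⟩ : ℚ) = D'.coroot ∧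
    (g ⟨D.root, D.rootMem⟩ : ℚ) = D'.root ∧
    ∀ (y : D.Y) (x : D.X), 2 * (f y : ℚ) * (g x : ℚ) = 2 * (y : ℚ) * (x : ℚ)

/-- The PGL₂ root datum 𝔇 = (ℤǎ, ǎ, ½ℤa, a) with ⟨ǎ,a⟩ = 2. -/
noncomputable def Dpgl : RootDatumQ where
  Y := zmultiples (1 : ℚ)
  coroot := 1
  corootMem := mem_zmultiples 1
  X := zmultiples (2⁻¹ : ℚ)
  root := 1
  rootMem := mem_zmultiples_iff.mpr ⟨2, by rw [zsmul_eq_mul]; norm_num⟩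

/-- The Langlands dual (SL₂) root datum 𝔇∨ = (½ℤa, a, ℤǎ, ǎ). -/
noncomputable def DpglDual : RootDatumQ where
  Y := zmultiples (2⁻¹ : ℚ)
  coroot := 1
  corootMem := mem_zmultiples_iff.mpr ⟨2, by rw [zsmul_eq_mul]; norm_num⟩
  X := zmultiples (1 : ℚ)
  root := 1
  rootMem := mem_zmultiples 1

/-- The twisted lattice Ỹ = {y ∈ Y : B(y,y') ∈ nℤ for all y' ∈ Y}, where Y = ℤǎ ⊂ ℚ and
B(kǎ, k'ǎ) = 2kk'. -/
noncomputable def Ytw (n : ℕ) : AddSubgroup ℚ where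
  carrier := {y | y ∈ zmultiples (1 : ℚ) ∧
    ∀ y' ∈ zmultiples (1 : ℚ), ∃ c : ℤ, 2 * y * y' = (n : ℚ) * c}
  zero_mem' := ⟨zero_mem _, fun y' _ => ⟨0, by push_cast; ring⟩⟩
  add_mem' := by
    intro a b ha hb
    obtain ⟨ha1, ha2⟩ := ha
    obtain ⟨hb1, hb2⟩ := hb
    refine ⟨add_mem ha1 hb1, fun y' hy' => ?_⟩
    obtain ⟨c₁, h₁⟩ := ha2 y' hy'
    obtain ⟨c₂, h₂⟩ := hb2 y' hy'
    exact ⟨c₁ + c₂, by push_cast; linear_combination h₁ + h₂⟩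
  neg_mem' := by
    intro a ha
    obtain ⟨ha1, ha2⟩ := ha
    refine ⟨neg_mem ha1, fun y' hy' => ?_⟩
    obtain ⟨c, h⟩ := ha2 y' hy'
    exact ⟨-c, by push_cast; linear_combination -h⟩

lemma mem_Ytw {n : ℕ} {y : ℚ} :
    y ∈ Ytw n ↔ (y ∈ zmultiples (1 : ℚ) ∧
      ∀ y' ∈ zmultiples (1 : ℚ), ∃ c : ℤ, 2 * y * y' = (n : ℚ) * c) :=
  Iff.rfl

/-- The twisted lattice X̃ = {x ∈ X ⊗ ℚ : ⟨y,x⟩ ∈ ℤ for all y ∈ Ỹ}. -/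
noncomputable def Xtw (n : ℕ) : AddSubgroup ℚ where
  carrier := {x | ∀ y ∈ Ytw n, ∃ c : ℤ, 2 * y * x = (c : ℚ)}
  zero_mem' := fun y _ => ⟨0, by push_cast; ring⟩
  add_mem' := by
    intro a b ha hb y hy
    obtain ⟨c₁, h₁⟩ := ha y hy
    obtain ⟨c₂, h₂⟩ := hb y hy
    exact ⟨c₁ + c₂, by push_cast; linear_combination h₁ + h₂⟩
  neg_mem' := by
    intro a ha y hy
    obtain ⟨c, h⟩ := ha y hy
    exact ⟨-c, by push_cast; linear_combination -h⟩

lemma mem_Xtw {n : ℕ} {x : ℚ} :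
    x ∈ Xtw n ↔ ∀ y ∈ Ytw n, ∃ c : ℤ, 2 * y * x = (c : ℚ) :=
  Iff.rfl

/-- The (Q,n)-twisted root datum 𝔇_{(Q,n)} = (Ỹ, nǎ, X̃, (1/n)a) of the PGL₂ datum for
the primitive twist Q(ǎ) = 1. -/
noncomputable def Dtw (n : ℕ) : RootDatumQ where
  Y := Ytw n
  coroot := n
  corootMem := by
    refine mem_Ytw.mpr ⟨mem_zmultiples_iff.mpr ⟨n, by rw [zsmul_eq_mul]; push_cast; ring⟩,
      fun y' hy' => ?_⟩
    obtain ⟨k, hk⟩ := mem_zmultiples_iff.mp hy'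
    rw [zsmul_eq_mul] at hk
    exact ⟨2 * k, by rw [← hk]; push_cast; ring⟩
  X := Xtw n
  root := 1 / n
  rootMem := by
    refine mem_Xtw.mpr fun y hy => ?_
    obtain ⟨hy1, hy2⟩ := mem_Ytw.mp hy
    rcases Nat.eq_zero_or_pos n with h0 | hpos
    · subst h0
      exact ⟨0, by push_cast; ring⟩
    · obtain ⟨c, hc⟩ := hy2 1 (mem_zmultiples 1)
      refine ⟨c, ?_⟩
      have hn : (n : ℚ) ≠ 0 := by positivity
      rw [mul_one] at hc
      field_simp
      linear_combination hc

noncomputable def scaleEquiv (c : ℚ) (hc : c ≠ 0) (A B : AddSubgroup ℚ)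
    (hAB : ∀ a ∈ A, c * a ∈ B) (hBA : ∀ b ∈ B, c⁻¹ * b ∈ A) : A ≃+ B where
  toFun a := ⟨c * a, hAB a a.2⟩
  invFun b := ⟨c⁻¹ * b, hBA b b.2⟩
  left_inv a := by ext; field_simp
  right_inv b := by ext; field_simp
  map_add' a b := by ext; simp [mul_add]

lemma mem_zm {g x : ℚ} : x ∈ zmultiples g ↔ ∃ k : ℤ, x = k * g := by
  rw [mem_zmultiples_iff]
  constructor
  · rintro ⟨k, hk⟩; exact ⟨k, by rw [← hk, zsmul_eq_mul]⟩
  · rintro ⟨k, hk⟩; exact ⟨k, by rw [zsmul_eq_mul, hk]⟩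

lemma Ytw_odd (n : ℕ) (hn : Odd n) : Ytw n = zmultiples (n : ℚ) := by
  ext y
  constructor
  · intro hy
    obtain ⟨h1, h2⟩ := mem_Ytw.mp hy
    obtain ⟨k, hk⟩ := mem_zm.mp h1
    rw [mul_one] at hk
    obtain ⟨c, hc⟩ := h2 1 (mem_zmultiples 1)
    rw [mul_one, hk] at hc
    have hint : 2 * k = (n : ℤ) * c := by exact_mod_cast hc
    have h2n : ¬ ((2:ℤ) ∣ (n:ℤ)) := by
      obtain ⟨m, hm⟩ := hn
      omega
    have h2c : (2:ℤ) ∣ c :=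
      (Int.prime_two.dvd_mul.mp ⟨k, hint.symm⟩).resolve_left h2n
    obtain ⟨c', hc'⟩ := h2c
    have hm : k = (n:ℤ) * c' :=
      mul_left_cancel₀ (two_ne_zero) (by linear_combination hint + (n:ℤ) * hc')
    exact mem_zm.mpr ⟨c', by rw [hk]; exact_mod_cast hm.trans (mul_comm (n:ℤ) c')⟩
  · intro hy
    obtain ⟨k, hk⟩ := mem_zm.mp hy
    refine mem_Ytw.mpr ⟨mem_zm.mpr ⟨k * n, by rw [hk]; push_cast; ring⟩, fun y' hy' => ?_⟩
    obtain ⟨m, hm⟩ := mem_zm.mp hy'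
    rw [mul_one] at hm
    exact ⟨2 * k * m, by rw [hk, hm]; push_cast; ring⟩

lemma Ytw_even (n : ℕ) (hn : Even n) : Ytw n = zmultiples ((n : ℚ) / 2) := by
  obtain ⟨t, ht⟩ := hn
  ext y
  constructor
  · intro hy
    obtain ⟨h1, h2⟩ := mem_Ytw.mp hy
    obtain ⟨k, hk⟩ := mem_zm.mp h1
    rw [mul_one] at hk
    obtain ⟨c, hc⟩ := h2 1 (mem_zmultiples 1)
    rw [mul_one, hk] at hc
    have hint : 2 * k = (n : ℤ) * c := by exact_mod_cast hc
    have hnt : (n:ℤ) = 2 * t := by omega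
    have hkc : k = (t:ℤ) * c :=
      mul_left_cancel₀ (two_ne_zero) (by linear_combination hint + c * hnt)
    refine mem_zm.mpr ⟨c, ?_⟩
    have hkQ : (k:ℚ) = (t:ℚ) * c := by exact_mod_cast hkc
    have hnQ2 : (n:ℚ) = 2 * t := by exact_mod_cast hnt
    rw [hk, hkQ, hnQ2]
    ring
  · intro hy
    obtain ⟨k, hk⟩ := mem_zm.mp hy
    have hy' : y = k * t := by rw [hk, ht]; push_cast; ring
    refine mem_Ytw.mpr ⟨mem_zm.mpr ⟨k * t, by rw [hy']; push_cast; ring⟩, fun y' hy2 => ?_⟩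
    obtain ⟨m, hm⟩ := mem_zm.mp hy2
    rw [mul_one] at hm
    refine ⟨k * m, ?_⟩
    rw [hy', hm, ht]
    push_cast
    ring

lemma Xtw_eq (n : ℕ) (g : ℚ) (hg : g ≠ 0) (h : Ytw n = zmultiples g) :
    Xtw n = zmultiples (1 / (2 * g)) := by
  ext x
  constructor
  · intro hx
    obtain ⟨c, hc⟩ := mem_Xtw.mp hx g (h ▸ mem_zmultiples g)
    refine mem_zm.mpr ⟨c, ?_⟩
    field_simp
    linear_combination hc
  · intro hx
    obtain ⟨k, hk⟩ := mem_zm.mp hx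
    refine mem_Xtw.mpr fun y hy => ?_
    rw [h] at hy
    obtain ⟨m, hm⟩ := mem_zm.mp hy
    refine ⟨m * k, ?_⟩
    rw [hk, hm]
    push_cast
    field_simp

lemma sc1 {q : ℚ} (h : q ≠ 0) (k : ℚ) : q⁻¹ * (k * q) = k * 1 := by field_simp
lemma sc2 {q : ℚ} (k : ℚ) : q⁻¹⁻¹ * (k * 1) = k * q := by rw [inv_inv]; ring
lemma sc3 {q : ℚ} (h : q ≠ 0) (k : ℚ) : q * (k * (1 / (2 * q))) = k * 2⁻¹ := by
  field_simp
lemma sc4 {q : ℚ} (k : ℚ) : q⁻¹ * (k * 2⁻¹) = k * (1 / (2 * q)) := by ring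
lemma sc5 {q : ℚ} (h : q ≠ 0) (k : ℚ) : q⁻¹ * (k * (q / 2)) = k * 2⁻¹ := by
  field_simp
lemma sc6 {q : ℚ} (k : ℚ) : q⁻¹⁻¹ * (k * 2⁻¹) = k * (q / 2) := by rw [inv_inv]; ring
lemma sc7 {q : ℚ} (h : q ≠ 0) (k : ℚ) : q * (k * (1 / q)) = k * 1 := by field_simp
lemma sc8 {q : ℚ} (k : ℚ) : q⁻¹ * (k * 1) = k * (1 / q) := by ring

/-- For the PGL₂ root datum with primitive twist (Q(ǎ) = 1) and positive
integer n, one has n(ǎ) = n, and the (Q,n)-twisted root datum satisfies: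
𝔇_{(Q,n)} = (nℤǎ, nǎ, (1/2n)ℤa, (1/n)a) ≅ 𝔇 if n is odd, and
𝔇_{(Q,n)} = ((n/2)ℤǎ, nǎ, (1/n)ℤa, (1/n)a) ≅ 𝔇∨ if n is even. -/
theorem stmt_10 (n : ℕ) (hn : 0 < n) :
    IsLeast {m : ℕ | 0 < m ∧ (n : ℤ) ∣ (m : ℤ) * 1} n ∧
    (Odd n →
      Ytw n = zmultiples (n : ℚ) ∧
      Xtw n = zmultiples (1 / (2 * n) : ℚ) ∧
      RootDatumQ.Iso (Dtw n) Dpgl) ∧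
    (Even n →
      Ytw n = zmultiples ((n : ℚ) / 2) ∧
      Xtw n = zmultiples (1 / (n : ℚ)) ∧
      RootDatumQ.Iso (Dtw n) DpglDual) := by
  have hnQ : (n : ℚ) ≠ 0 := Nat.cast_ne_zero.mpr hn.ne'
  have hnI : ((n : ℚ)⁻¹) ≠ 0 := inv_ne_zero hnQ
  refine ⟨⟨⟨hn, by simp⟩, fun m hm => ?_⟩, ?_, ?_⟩
  · obtain ⟨hm0, hdvd⟩ := hm
    rw [mul_one] at hdvd
    exact_mod_cast Int.le_of_dvd (by exact_mod_cast hm0) hdvd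
  · intro hodd
    have hY := Ytw_odd n hodd
    have hX := Xtw_eq n n hnQ hY
    refine ⟨hY, by rw [hX], ?_⟩
    refine ⟨(scaleEquiv (n:ℚ)⁻¹ hnI (Ytw n) (zmultiples (1:ℚ)) ?_ ?_ :
        (Dtw n).Y ≃+ Dpgl.Y),
      (scaleEquiv (n:ℚ) hnQ (Xtw n) (zmultiples (2⁻¹:ℚ)) ?_ ?_ :
        (Dtw n).X ≃+ Dpgl.X), ?_, ?_, ?_⟩
    · intro a ha
      rw [hY] at ha
      obtain ⟨k, hk⟩ := mem_zm.mp ha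
      exact mem_zm.mpr ⟨k, by rw [hk]; exact sc1 hnQ k⟩
    · intro b hb
      obtain ⟨k, hk⟩ := mem_zm.mp hb
      rw [hY]
      exact mem_zm.mpr ⟨k, by rw [hk]; exact sc2 k⟩
    · intro a ha
      rw [hX] at ha
      obtain ⟨k, hk⟩ := mem_zm.mp ha
      exact mem_zm.mpr ⟨k, by rw [hk]; exact sc3 hnQ k⟩
    · intro b hb
      obtain ⟨k, hk⟩ := mem_zm.mp hb
      rw [hX]
      exact mem_zm.mpr ⟨k, by rw [hk]; exact sc4 k⟩
    · show (n:ℚ)⁻¹ * (Dtw n).coroot = Dpgl.coroot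
      show (n:ℚ)⁻¹ * n = 1
      field_simp
    · show (n:ℚ) * (Dtw n).root = Dpgl.root
      show (n:ℚ) * (1 / n) = 1
      field_simp
    · intro y x
      show 2 * ((n:ℚ)⁻¹ * y) * ((n:ℚ) * x) = 2 * (y:ℚ) * x
      field_simp
  · intro heven
    have hY := Ytw_even n heven
    have hg : ((n:ℚ)/2) ≠ 0 := by positivity
    have hX := Xtw_eq n ((n:ℚ)/2) hg hY
    have hX' : Xtw n = zmultiples (1 / (n:ℚ)) := by
      rw [hX]; congr 1; field_simp
    refine ⟨hY, hX', ?_⟩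
    refine ⟨(scaleEquiv (n:ℚ)⁻¹ hnI (Ytw n) (zmultiples (2⁻¹:ℚ)) ?_ ?_ :
        (Dtw n).Y ≃+ DpglDual.Y),
      (scaleEquiv (n:ℚ) hnQ (Xtw n) (zmultiples (1:ℚ)) ?_ ?_ :
        (Dtw n).X ≃+ DpglDual.X), ?_, ?_, ?_⟩
    · intro a ha
      rw [hY] at ha
      obtain ⟨k, hk⟩ := mem_zm.mp ha
      exact mem_zm.mpr ⟨k, by rw [hk]; exact sc5 hnQ k⟩
    · intro b hb
      obtain ⟨k, hk⟩ := mem_zm.mp hb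
      rw [hY]
      exact mem_zm.mpr ⟨k, by rw [hk]; exact sc6 k⟩
    · intro a ha
      rw [hX'] at ha
      obtain ⟨k, hk⟩ := mem_zm.mp ha
      exact mem_zm.mpr ⟨k, by rw [hk]; exact sc7 hnQ k⟩
    · intro b hb
      obtain ⟨k, hk⟩ := mem_zm.mp hb
      rw [hX']
      exact mem_zm.mpr ⟨k, by rw [hk]; exact sc8 k⟩
    · show (n:ℚ)⁻¹ * (Dtw n).coroot = DpglDual.coroot
      show (n:ℚ)⁻¹ * n = 1
      field_simp
    · show (n:ℚ) * (Dtw n).root = DpglDual.root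
      show (n:ℚ) * (1 / n) = 1
      field_simp
    · intro y x
      show 2 * ((n:ℚ)⁻¹ * y) * ((n:ℚ) * x) = 2 * (y:ℚ) * x
      field_simp
end

section
/- Let 𝔇_{(Q,n)} be simply connected with box of restricted coweights Box = {λ̌ ∈ Y₊ : 0 ≤ ⟨λ̌, a_i⟩ < n(ǎ_i) for all i ∈ I}. Then every dominant coweight λ̌ ∈ Y₊ admits a unique decomposition λ̌ = λ̌₀ + ζ̌ with λ̌₀ ∈ Box and ζ̌ ∈ Ỹ₊, where Ỹ₊ is the set of dominant coweights in the twisted lattice Ỹ. -/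
/-! Pairing with the simple roots identifies the lattice spanned by the fundamental
coweights with `ℤ^I`, and the twisted lattice with `∏ i, n_i ℤ`. Coordinatewise, the
decomposition `λ̌ = λ̌₀ + ζ̌` is then Euclidean division of `⟨λ̌, a_i⟩` by `n_i`: the box
coordinate is the remainder and the twisted coordinate the quotient, both unique. -/

section BoxDecomposition

variable {I Y : Type*} [Fintype I] [DecidableEq I] [AddCommGroup Y]
  {pair : Y →+ I → ℤ} {ω : I → Y}

lemma pair_sum_zsmul_of_dual (hω : ∀ i j, pair (ω i) j = if i = j then 1 else 0)
    (c : I → ℤ) (j : I) : pair (∑ i, c i • ω i) j = c j := by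
  simp [map_sum, hω]

lemma pair_sub_sum_zsmul_twisted (hω : ∀ i j, pair (ω i) j = if i = j then 1 else 0)
    (n : I → ℕ) (lv : Y) (c : I → ℤ) (j : I) :
    pair (lv - ∑ i, c i • (n i : ℤ) • ω i) j = pair lv j - n j * c j := by
  simp_rw [smul_smul]
  rw [map_sub, Pi.sub_apply, pair_sum_zsmul_of_dual hω, mul_comm]

lemma sub_sum_zsmul_twisted_mem_box_iff (hω : ∀ i j, pair (ω i) j = if i = j then 1 else 0)
    {n : I → ℕ} (hn : ∀ i, 0 < n i) (lv : Y) (c : I → ℤ) :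
    (∀ j, 0 ≤ pair (lv - ∑ i, c i • (n i : ℤ) • ω i) j ∧
        pair (lv - ∑ i, c i • (n i : ℤ) • ω i) j < n j) ↔
      ∀ j, c j = pair lv j / n j := by
  refine forall_congr' fun j => ?_
  rw [pair_sub_sum_zsmul_twisted hω, eq_comm]
  have hdiv := Int.ediv_emod_unique (a := pair lv j) (r := pair lv j - n j * c j) (q := c j)
    (b := n j) (by exact_mod_cast hn j)
  constructor
  · exact fun hbox => (hdiv.2 ⟨sub_add_cancel _ _, hbox⟩).1
  · intro hc
    exact (hdiv.1 ⟨hc, by rw [Int.emod_def, hc]⟩).2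

end BoxDecomposition

/-- Box decomposition.  Let pair(·,a_i) be the pairings of the coweight
lattice Y with the simple roots, n_i = n(ǎ_i) > 0, and ω_i the fundamental coweights
(pair(ω_i, a_j) = δ_{ij}), so that the twisted lattice Ỹ is generated by the n_i ω_i.
Then every dominant λ̌ ∈ Y₊ decomposes uniquely as λ̌ = λ̌₀ + ζ̌ with λ̌₀ in the box
(0 ≤ ⟨λ̌₀,a_i⟩ < n_i for all i) and ζ̌ ∈ Ỹ₊ dominant in the twisted lattice. -/
theorem stmt_13 (I : Type*) [Fintype I] [DecidableEq I]
    (Y : Type*) [AddCommGroup Y]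
    (pair : Y →+ I → ℤ)
    (n : I → ℕ) (hn : ∀ i, 0 < n i)
    (ω : I → Y) (hω : ∀ i j, pair (ω i) j = if i = j then 1 else 0)
    (lv : Y) (hdom : ∀ i, 0 ≤ pair lv i) :
    ∃! d : Y × Y,
      (∀ i, 0 ≤ pair d.1 i ∧ pair d.1 i < n i) ∧
      d.2 ∈ AddSubgroup.closure (Set.range fun i => (n i : ℤ) • ω i) ∧
      (∀ i, 0 ≤ pair d.2 i) ∧
      lv = d.1 + d.2 := by
  set q : I → ℤ := fun i => pair lv i / n i
  set ζ : Y := ∑ i, q i • (n i : ℤ) • ω i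
  have hbox := sub_sum_zsmul_twisted_mem_box_iff hω hn
  refine ⟨(lv - ζ, ζ),
    ⟨(hbox lv q).2 fun _ => rfl, ?_, fun j => ?_, (sub_add_cancel lv ζ).symm⟩, ?_⟩
  · exact AddSubgroup.mem_closure_range_iff_of_fintype.2 ⟨q, rfl⟩
  · have hζ : pair ζ j = q j * n j := by
      simp_rw [ζ, smul_smul, pair_sum_zsmul_of_dual hω]
    rw [hζ]
    exact mul_nonneg (Int.ediv_nonneg (hdom j) (Int.natCast_nonneg _)) (Int.natCast_nonneg _)
  · rintro ⟨b, z⟩ ⟨hb, hz, -, rfl⟩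
    obtain ⟨c, rfl⟩ := AddSubgroup.mem_closure_range_iff_of_fintype.1 hz
    have hc : c = q := by
      refine funext ((hbox _ c).1 ?_)
      simpa only [add_sub_cancel_right] using hb
    rw [hc, add_sub_cancel_right]
end

section
/- The metaplectic Demazure–Lusztig operator T̃_a on ℤ_{τ,𝔤}[Y] satisfies the Hecke quadratic relation T̃_a² = (τ²−1)T̃_a + τ², i.e. (T̃_a − τ²)(T̃_a + 1) = 0, where T̃_a acts by: Y_λ̌ · T̃_a = 𝔤_{⟨λ̌+ρ̌,a⟩Q(ǎ)} Y_{λ̌•s_a} + (τ²−1) Σ_{k≥0, kn(ǎ)≤⟨λ̌,a⟩} Y_{λ̌ − kn(ǎ)ǎ} if ⟨λ̌,a⟩ ≥ 0, and Y_λ̌ · T̃_a = 𝔤_{⟨λ̌+ρ̌,a⟩Q(ǎ)} Y_{λ̌•s_a} + (1−τ²) Σ_{k>0, kn(ǎ)<−⟨λ̌,a⟩} Y_{λ̌ + kn(ǎ)ǎ} if ⟨λ̌,a⟩ < 0. -/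
/-!
Along the `ǎ`-string through `λ̌`, both branches of the defining formula read
`Y_λ̌ · T̃_a = 𝔤_{⟨λ̌+ρ̌,a⟩Q(ǎ)} Y_{λ̌•s_a} + (τ²-1) ∑_{0 ≤ k < L} Y_{λ̌ - k n(ǎ) ǎ}` with
`L = ⌊⟨λ̌,a⟩ / n(ǎ)⌋ + 1`, once the sum is read as a signed (oriented) sum when `L < 0`.
Since `n ∣ n(ǎ) Q(ǎ)`, the Gauss sum is constant on the terms of that sum, and applying `T̃_a`
to it the `(τ²-1)`-parts telescope: with `F j` the sum of the first `j` terms of the string,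
`∑_{0 ≤ i < L} (F (L - i) - F i) = F L - F 0`.
What remains is the reflection `λ̌ ↦ λ̌•s_a`: if `n(ǎ) ∤ ⟨λ̌+ρ̌,a⟩` then `𝔤_k 𝔤_{-k} = τ²` and
the reflected strings match exactly; otherwise both Gauss sums are `𝔤_0 = -1` and the two
strings differ by the single term `Y_λ̌`.
-/

open Finsupp

section SignedSum

open Finset

variable {M : Type*} [AddCommGroup M]

/-- The discrete integral `∫₀ʲ f`: `∑_{0 ≤ i < j} f i` for `j ≥ 0`, and `-∑_{j ≤ i < 0} f i` for
`j < 0` (one of the two sums is always empty). -/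
noncomputable def signedSum (f : ℤ → M) (j : ℤ) : M :=
  ∑ i ∈ Ico 0 j, f i - ∑ i ∈ Ico j 0, f i

@[simp]
lemma signedSum_zero (f : ℤ → M) : signedSum f 0 = 0 := by
  simp [signedSum]

lemma signedSum_add_one (f : ℤ → M) (j : ℤ) : signedSum f (j + 1) = signedSum f j + f j := by
  unfold signedSum
  rcases le_or_gt 0 j with hj | hj
  · have hIco : Ico 0 (j + 1) = insert j (Ico 0 j) := by ext; simp; omega
    rw [hIco, sum_insert (by simp), Ico_eq_empty_of_le hj,
      Ico_eq_empty_of_le (by omega : 0 ≤ j + 1)]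
    simp only [sum_empty]
    abel
  · have hIco : Ico j 0 = insert j (Ico (j + 1) 0) := by ext; simp; omega
    rw [hIco, sum_insert (by simp), Ico_eq_empty_of_le hj.le,
      Ico_eq_empty_of_le (by omega : j + 1 ≤ 0)]
    simp only [sum_empty]
    abel

@[simp]
lemma signedSum_one (f : ℤ → M) : signedSum f 1 = f 0 := by
  simpa using signedSum_add_one f 0

lemma eq_signedSum_of_add_one {F f : ℤ → M} (h0 : F 0 = 0)
    (hstep : ∀ j, F (j + 1) = F j + f j) (j : ℤ) : F j = signedSum f j := by
  induction j using Int.induction_on with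
  | zero => simp [h0]
  | succ i ih => rw [hstep, signedSum_add_one, ih]
  | pred i ih =>
    have h := hstep (-i - 1)
    rw [sub_add_cancel, ih, ← sub_add_cancel (-(i : ℤ)) 1, signedSum_add_one, sub_add_cancel] at h
    exact add_right_cancel h.symm

lemma map_signedSum {N : Type*} [AddCommGroup N] (φ : M →+ N) (f : ℤ → M) (j : ℤ) :
    φ (signedSum f j) = signedSum (fun i => φ (f i)) j :=
  eq_signedSum_of_add_one (F := fun j => φ (signedSum f j)) (by simp)
    (fun j => by rw [signedSum_add_one, map_add]) j

lemma signedSum_add_distrib (f g : ℤ → M) (j : ℤ) :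
    signedSum (fun i => f i + g i) j = signedSum f j + signedSum g j :=
  (eq_signedSum_of_add_one (F := fun j => signedSum f j + signedSum g j) (by simp)
    (fun j => by rw [signedSum_add_one, signedSum_add_one]; abel) j).symm

lemma signedSum_sub_distrib (f g : ℤ → M) (j : ℤ) :
    signedSum (fun i => f i - g i) j = signedSum f j - signedSum g j :=
  (eq_signedSum_of_add_one (F := fun j => signedSum f j - signedSum g j) (by simp)
    (fun j => by rw [signedSum_add_one, signedSum_add_one]; abel) j).symm

lemma smul_signedSum {S : Type*} [Monoid S] [DistribMulAction S M] (c : S) (f : ℤ → M) (j : ℤ) :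
    c • signedSum f j = signedSum (fun i => c • f i) j :=
  map_signedSum (DistribSMul.toAddMonoidHom M c) f j

lemma signedSum_add (f : ℤ → M) (a b : ℤ) :
    signedSum f (a + b) = signedSum f a + signedSum (fun i => f (a + i)) b := by
  rw [← sub_eq_iff_eq_add']
  exact eq_signedSum_of_add_one (F := fun b => signedSum f (a + b) - signedSum f a) (by simp)
    (fun j => by rw [← add_assoc, signedSum_add_one]; abel) b

lemma signedSum_comp_sub (f : ℤ → M) (c j : ℤ) :
    signedSum (fun i => f (c - i)) j = signedSum f (c + 1) - signedSum f (c + 1 - j) :=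
  (eq_signedSum_of_add_one (F := fun j => signedSum f (c + 1) - signedSum f (c + 1 - j))
    (by simp) (fun j => by
      rw [show c + 1 - j = c - j + 1 by ring, signedSum_add_one f (c - j),
        show c + 1 - (j + 1) = c - j by ring]
      abel) j).symm

lemma signedSum_sub_reflect (F : ℤ → M) (L : ℤ) :
    signedSum (fun i => F (L - i) - F i) L = F L - F 0 := by
  rw [signedSum_sub_distrib, signedSum_comp_sub, signedSum_add_one, add_sub_cancel_left,
    signedSum_one]
  abel

end SignedSum

lemma dvd_mul_iff_dvd_of_isLeast {n m : ℕ} {q : ℤ}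
    (hm : IsLeast {m' : ℕ | 0 < m' ∧ (n : ℤ) ∣ m' * q} m) (s : ℤ) :
    (n : ℤ) ∣ s * q ↔ (m : ℤ) ∣ s := by
  obtain ⟨⟨hm0, hnm⟩, hmin⟩ := hm
  refine ⟨fun hs => ?_, fun ⟨k, hk⟩ => ?_⟩
  · have hm0' : (0 : ℤ) < m := by exact_mod_cast hm0
    have hr0 : 0 ≤ s % m := Int.emod_nonneg s hm0'.ne'
    have hrm : s % m < m := Int.emod_lt_of_pos s hm0'
    have hnr : (n : ℤ) ∣ (s % m).toNat * q := by
      rw [Int.toNat_of_nonneg hr0, Int.emod_def, sub_mul, mul_comm (m : ℤ), mul_assoc]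
      exact dvd_sub hs (dvd_mul_of_dvd_right hnm _)
    have hr : ¬ 0 < (s % m).toNat := fun hpos => by
      have := hmin ⟨hpos, hnr⟩
      omega
    exact Int.dvd_of_emod_eq_zero (by omega)
  · rw [hk, mul_comm (m : ℤ), mul_assoc]
    exact dvd_mul_of_dvd_right hnm k

lemma neg_sub_two_ediv_add_one {m t : ℤ} (hm : 0 < m) (h : ¬ m ∣ t + 1) :
    (-t - 2) / m + 1 = -(t / m) := by
  have hdiv := Int.mul_ediv_add_emod t m
  have hr0 : 0 ≤ t % m := Int.emod_nonneg t hm.ne'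
  have hrm : t % m < m := Int.emod_lt_of_pos t hm
  have hr : t % m ≠ m - 1 := fun hr => h ⟨t / m + 1, by linarith⟩
  have := ((Int.ediv_emod_unique (a := -t - 2) (r := m - t % m - 2) (q := -(t / m) - 1) hm).mpr
    ⟨by linarith, by omega, by omega⟩).1
  omega

lemma mul_sub_one_ediv {m : ℤ} (hm : 0 < m) (k : ℤ) : (m * k - 1) / m = k - 1 :=
  ((Int.ediv_emod_unique (r := m - 1) hm).mpr ⟨by ring, by omega, by omega⟩).1

section FilteredSums

open Finset

variable {M : Type*} [AddCommGroup M]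

lemma sum_filter_mul_le_eq_signedSum (f : ℤ → M) {m t : ℤ} (hm : 0 < m) (ht : 0 ≤ t) :
    ∑ k ∈ (Icc 0 t).filter (fun k => k * m ≤ t), f k = signedSum f (t / m + 1) := by
  have hq : 0 ≤ t / m := Int.ediv_nonneg ht hm.le
  rw [signedSum, Ico_eq_empty_of_le (by omega : 0 ≤ t / m + 1), sum_empty, sub_zero]
  refine sum_congr ?_ fun _ _ => rfl
  ext k
  simp only [mem_filter, mem_Icc, mem_Ico, Int.lt_add_one_iff, Int.le_ediv_iff_mul_le hm]
  constructor
  · rintro ⟨⟨hk, -⟩, hkm⟩; exact ⟨hk, hkm⟩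
  · rintro ⟨hk, hkm⟩; exact ⟨⟨hk, by nlinarith⟩, hkm⟩

lemma sum_filter_mul_lt_neg_eq_signedSum (f : ℤ → M) {m t : ℤ} (hm : 0 < m) (ht : t < 0) :
    ∑ k ∈ (Icc 0 (-t)).filter (fun k => 0 < k ∧ k * m < -t), f (-k) =
      -signedSum f (t / m + 1) := by
  have hq : t / m < 0 := Int.ediv_neg_of_neg_of_pos ht hm
  rw [signedSum, Ico_eq_empty_of_le (by omega : t / m + 1 ≤ 0), sum_empty, zero_sub, neg_neg]
  refine sum_nbij' (fun k => -k) (fun i => -i) ?_ ?_ (fun _ _ => neg_neg _) (fun _ _ => neg_neg _)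
    (fun _ _ => rfl)
  · intro k hk
    simp only [mem_filter, mem_Icc, mem_Ico] at hk ⊢
    have := (Int.ediv_lt_iff_lt_mul hm (a := t) (b := -k)).mpr (by linarith)
    omega
  · intro i hi
    simp only [mem_filter, mem_Icc, mem_Ico] at hi ⊢
    have := (Int.ediv_lt_iff_lt_mul hm).mp (by omega : t / m < i)
    refine ⟨⟨by omega, ?_⟩, by omega, by linarith⟩
    nlinarith

end FilteredSums

section RootString

open Finset

variable {R : Type*} [CommRing R] {Y : Type*} [AddCommGroup Y]

variable (R) in
noncomputable def stringSum (ca : Y) (m : ℤ) (μ : Y) (j : ℤ) : Y →₀ R :=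
  signedSum (fun k : ℤ => single (μ - (k * m) • ca) (1 : R)) j

lemma stringSum_sub_smul (ca : Y) (m : ℤ) (μ : Y) (i l : ℤ) :
    stringSum R ca m (μ - (i * m) • ca) l =
      stringSum R ca m μ (i + l) - stringSum R ca m μ i := by
  simp only [stringSum, signedSum_add, add_sub_cancel_left, add_mul, add_smul, sub_sub]

lemma apply_single_eq {τ : R} {g : ℤ → R} {p : Y →+ ℤ} {ca ρ : Y} {m qa : ℤ}
    {T : (Y →₀ R) →ₗ[R] (Y →₀ R)} (hm : 0 < m)
    (hTpos : ∀ lv : Y, 0 ≤ p lv →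
      T (single lv 1) =
        g (p (lv + ρ) * qa) • single (lv - p (lv + ρ) • ca) 1 +
        (τ ^ 2 - 1) •
          ∑ k ∈ (Icc (0 : ℤ) (p lv)).filter (fun k => k * m ≤ p lv),
            single (lv - (k * m) • ca) 1)
    (hTneg : ∀ lv : Y, p lv < 0 →
      T (single lv 1) =
        g (p (lv + ρ) * qa) • single (lv - p (lv + ρ) • ca) 1 +
        (1 - τ ^ 2) •
          ∑ k ∈ (Icc (0 : ℤ) (-(p lv))).filter (fun k => 0 < k ∧ k * m < -(p lv)),
            single (lv + (k * m) • ca) 1)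
    (lv : Y) :
    T (single lv 1) = g (p (lv + ρ) * qa) • single (lv - p (lv + ρ) • ca) 1 +
      (τ ^ 2 - 1) • stringSum R ca m lv (p lv / m + 1) := by
  rcases le_or_gt 0 (p lv) with h | h
  · rw [hTpos lv h, sum_filter_mul_le_eq_signedSum _ hm h, stringSum]
  · have hneg : ∀ k : ℤ, single (lv + (k * m) • ca) (1 : R) = single (lv - (-k * m) • ca) 1 := by
      intro k
      rw [neg_mul, neg_smul, sub_neg_eq_add]
    rw [hTneg lv h]
    simp_rw [hneg]
    rw [sum_filter_mul_lt_neg_eq_signedSum (fun k => single (lv - (k * m) • ca) 1) hm h,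
      stringSum, smul_neg, ← neg_smul, neg_sub]

lemma apply_stringSum {τ : R} {g : ℤ → R} {p : Y →+ ℤ} {ca ρ : Y} {m qa : ℤ}
    {T : (Y →₀ R) →ₗ[R] (Y →₀ R)} (hm : 0 < m) (hca : p ca = 2)
    (hgm : ∀ s k : ℤ, g ((s + k * m) * qa) = g (s * qa))
    (hT : ∀ lv : Y, T (single lv 1) = g (p (lv + ρ) * qa) • single (lv - p (lv + ρ) • ca) 1 +
      (τ ^ 2 - 1) • stringSum R ca m lv (p lv / m + 1))
    (μ : Y) :
    T (stringSum R ca m μ (p μ / m + 1)) =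
      g (p (μ + ρ) * qa) •
          signedSum (fun k => single (μ - p (μ + ρ) • ca + (k * m) • ca) 1) (p μ / m + 1) +
        (τ ^ 2 - 1) • stringSum R ca m μ (p μ / m + 1) := by
  set L := p μ / m + 1 with hLdef
  have hterm : ∀ i : ℤ, T (single (μ - (i * m) • ca) 1) =
      g (p (μ + ρ) * qa) • single (μ - p (μ + ρ) • ca + (i * m) • ca) 1 +
        (τ ^ 2 - 1) • (stringSum R ca m μ (L - i) - stringSum R ca m μ i) := by
    intro i
    have hp : p (μ - (i * m) • ca + ρ) = p (μ + ρ) + (-2 * i) * m := by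
      simp only [map_add, map_sub, map_zsmul, hca, smul_eq_mul]
      ring
    have hL : p (μ - (i * m) • ca) / m + 1 = L - 2 * i := by
      rw [map_sub, map_zsmul, hca, smul_eq_mul, show p μ - i * m * 2 = p μ + (-2 * i) * m by ring,
        Int.add_mul_ediv_right _ _ hm.ne', hLdef]
      ring
    rw [hT, hp, hgm, hL, stringSum_sub_smul, show i + (L - 2 * i) = L - i by ring]
    congr 3
    module
  calc T (stringSum R ca m μ L)
      = signedSum (fun i => T (single (μ - (i * m) • ca) 1)) L :=
        map_signedSum T.toAddMonoidHom _ L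
    _ = _ := by
        simp_rw [hterm, signedSum_add_distrib, ← smul_signedSum,
          signedSum_sub_reflect (fun i => stringSum R ca m μ i)]
        simp [stringSum]

lemma gauss_eq_neg_one_of_dvd {g : ℤ → R} {n : ℕ} {m qa u : ℤ} (hg0 : g 0 = -1)
    (hgper : ∀ k l : ℤ, (n : ℤ) ∣ (k - l) → g k = g l)
    (hdvd : ∀ s : ℤ, (n : ℤ) ∣ s * qa ↔ m ∣ s) (hu : m ∣ u) :
    g (u * qa) = -1 := by
  rw [hgper _ 0 (by simpa using (hdvd u).mpr hu), hg0]

lemma apply_apply_single {τ : R} {g : ℤ → R} {p : Y →+ ℤ} {ca ρ : Y} {n : ℕ} {m qa : ℤ}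
    {T : (Y →₀ R) →ₗ[R] (Y →₀ R)} (hm : 0 < m)
    (hg0 : g 0 = -1)
    (hgper : ∀ k l : ℤ, (n : ℤ) ∣ (k - l) → g k = g l)
    (hginv : ∀ k : ℤ, ¬ (n : ℤ) ∣ k → g k * g (-k) = τ ^ 2)
    (hdvd : ∀ s : ℤ, (n : ℤ) ∣ s * qa ↔ m ∣ s)
    (hca : p ca = 2) (hρ : p ρ = 1)
    (hT : ∀ lv : Y, T (single lv 1) = g (p (lv + ρ) * qa) • single (lv - p (lv + ρ) • ca) 1 +
      (τ ^ 2 - 1) • stringSum R ca m lv (p lv / m + 1))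
    (lv : Y) :
    T (T (single lv 1)) = (τ ^ 2 - 1) • T (single lv 1) + τ ^ 2 • single lv 1 := by
  have hgm : ∀ s k : ℤ, g ((s + k * m) * qa) = g (s * qa) := fun s k =>
    hgper _ _ (by rw [← sub_mul]; exact (hdvd _).mpr ⟨k, by ring⟩)
  set u := p (lv + ρ) with hu
  set lv' := lv - u • ca with hlv'
  set f : ℤ → Y →₀ R := fun k => single (lv' - (k * m) • ca) 1 with hf
  have hpu : u = p lv + 1 := by rw [hu, map_add, hρ]
  have hp' : p lv' = -p lv - 2 := by
    rw [hlv', map_sub, map_zsmul, hca, smul_eq_mul, hpu]; ring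
  have hu' : p (lv' + ρ) = -u := by rw [map_add, hp', hρ, hpu]; ring
  have hreflect : signedSum (fun k => single (lv' + (k * m) • ca) 1) (p lv / m + 1) =
      f 0 - signedSum f (-(p lv / m)) := by
    have h := signedSum_comp_sub f 0 (p lv / m + 1)
    simp only [hf, zero_sub, neg_mul, neg_smul, sub_neg_eq_add, zero_add, signedSum_one] at h
    rw [h, show 1 - (p lv / m + 1) = -(p lv / m) by ring]
  rw [hT lv, map_add, map_smul, map_smul, apply_stringSum hm hca hgm hT, hT lv', hu',
    show lv' - (-u) • ca = lv by rw [hlv', neg_smul, sub_neg_eq_add, sub_add_cancel], hreflect,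
    hp', stringSum, ← hf, ← hu, show f 0 = single lv' 1 by simp [hf]]
  by_cases hmu : m ∣ u
  · obtain ⟨d, hd⟩ := hmu
    have hγ := gauss_eq_neg_one_of_dvd hg0 hgper hdvd ⟨d, hd⟩
    have hγ' := gauss_eq_neg_one_of_dvd hg0 hgper hdvd (dvd_neg.mpr ⟨d, hd⟩)
    have hL : -(p lv / m) = -d + 1 := by
      rw [show p lv = m * d - 1 by omega, mul_sub_one_ediv hm]; ring
    have hL' : (-p lv - 2) / m + 1 = -d := by
      rw [show -p lv - 2 = m * (-d) - 1 by rw [hpu] at hd; linarith, mul_sub_one_ediv hm]; ring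
    have hfd : f (-d) = single lv 1 := by
      simp only [hf, hlv', hd]
      congr 1
      module
    rw [hL, hL', signedSum_add_one, hfd, hγ, hγ']
    module
  · have hγγ' : g (u * qa) * g (-u * qa) = τ ^ 2 := by
      rw [neg_mul]; exact hginv _ (fun h => hmu ((hdvd u).mp h))
    have hL : (-p lv - 2) / m + 1 = -(p lv / m) :=
      neg_sub_two_ediv_add_one hm (by rwa [← hpu])
    rw [hL]
    linear_combination (norm := module) hγγ' • single lv (1 : R)

end RootString

/-- The metaplectic Demazure–Lusztig operator T̃_a on ℤ_{τ,𝔤}[Y], acting on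
the basis by the explicit Chinta–Gunnells–Puskás formulas, satisfies the Hecke quadratic
relation T̃_a² = (τ²−1)T̃_a + τ², i.e. (T̃_a − τ²)(T̃_a + 1) = 0.
Here: `R` is the generic ring with parameters τ and Gauss sums g = 𝔤 (with 𝔤₀ = −1,
𝔤_k depending only on k mod n, and 𝔤_k 𝔤_{−k} = τ² for k ≢ 0 mod n); `Y` is the coweight
lattice; `p λ̌ = ⟨λ̌, a⟩` for the simple root a with coroot `ca = ǎ` (⟨ǎ,a⟩ = 2) and
`ρ = ρ̌` (⟨ρ̌,a⟩ = 1); `m = n(ǎ)` is the least positive integer with n ∣ m·Q(ǎ), where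
`qa = Q(ǎ)`; the dot action is λ̌ • s_a = λ̌ − ⟨λ̌+ρ̌,a⟩ǎ. -/
theorem stmt_14
    (R : Type*) [CommRing R] (n : ℕ) (τ : R) (g : ℤ → R)
    (hg0 : g 0 = -1)
    (hgper : ∀ k l : ℤ, (n : ℤ) ∣ (k - l) → g k = g l)
    (hginv : ∀ k : ℤ, ¬ (n : ℤ) ∣ k → g k * g (-k) = τ ^ 2)
    (Y : Type*) [AddCommGroup Y]
    (p : Y →+ ℤ)
    (ca : Y) (hca : p ca = 2)
    (ρ : Y) (hρ : p ρ = 1)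
    (m : ℕ) (qa : ℤ)
    (hm : IsLeast {m' : ℕ | 0 < m' ∧ (n : ℤ) ∣ (m' : ℤ) * qa} m)
    (T : (Y →₀ R) →ₗ[R] (Y →₀ R))
    (hTpos : ∀ lv : Y, 0 ≤ p lv →
      T (single lv 1) =
        g (p (lv + ρ) * qa) • single (lv - p (lv + ρ) • ca) 1 +
        (τ ^ 2 - 1) •
          ∑ k ∈ (Finset.Icc (0 : ℤ) (p lv)).filter (fun k => k * (m : ℤ) ≤ p lv),
            single (lv - (k * (m : ℤ)) • ca) 1)
    (hTneg : ∀ lv : Y, p lv < 0 →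
      T (single lv 1) =
        g (p (lv + ρ) * qa) • single (lv - p (lv + ρ) • ca) 1 +
        (1 - τ ^ 2) •
          ∑ k ∈ (Finset.Icc (0 : ℤ) (-(p lv))).filter
              (fun k => 0 < k ∧ k * (m : ℤ) < -(p lv)),
            single (lv + (k * (m : ℤ)) • ca) 1) :
    ∀ v : Y →₀ R, T (T v) = (τ ^ 2 - 1) • T v + τ ^ 2 • v := by
  have hm0 : (0 : ℤ) < m := by exact_mod_cast hm.1.1
  have hT := apply_single_eq hm0 hTpos hTneg
  have hsq : T ∘ₗ T = (τ ^ 2 - 1) • T + τ ^ 2 • LinearMap.id := by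
    refine lhom_ext' fun lv => LinearMap.ext_ring ?_
    simpa using apply_apply_single hm0 hg0 hgper hginv (dvd_mul_iff_dvd_of_isLeast hm) hca hρ hT lv
  exact fun v => LinearMap.congr_fun hsq v
end

section
/- Let a be a simple root with coroot ǎ, m = n(ǎ), and λ̌ ∈ Y with 0 < ⟨λ̌+ρ̌, a⟩ < m. Then the element Y_λ̌ − 𝔤_{⟨λ̌+ρ̌,a⟩Q(ǎ)} Y_{λ̌•s_a} is an eigenvector of the metaplectic Demazure–Lusztig operator T̃_a with eigenvalue −1, i.e. (Y_λ̌ − 𝔤_j Q(ǎ) Y_{λ̌•s_a}) · T̃_a = −(Y_λ̌ − 𝔤_{jQ(ǎ)} Y_{λ̌•s_a}) where j = ⟨λ̌+ρ̌,a⟩. -/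
open Finsupp

/-- If 0 < ⟨λ̌+ρ̌,a⟩ < n(ǎ), then Y_λ̌ − 𝔤_{⟨λ̌+ρ̌,a⟩Q(ǎ)} Y_{λ̌•s_a} is an
eigenvector of the metaplectic Demazure–Lusztig operator T̃_a with eigenvalue −1.
Setup as for the operator: `R` generic ring with τ and Gauss sums g (𝔤₀ = −1, period n,
𝔤_k𝔤_{−k} = τ² for k ≢ 0 mod n); `p λ̌ = ⟨λ̌,a⟩`, coroot `ca` with ⟨ǎ,a⟩ = 2, `ρ = ρ̌` with
⟨ρ̌,a⟩ = 1, `m = n(ǎ)` least positive with n ∣ m·Q(ǎ), `qa = Q(ǎ)`; dot action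
λ̌ • s_a = λ̌ − ⟨λ̌+ρ̌,a⟩ǎ; T̃_a acts by the explicit formulas. -/
theorem stmt_15
    (R : Type*) [CommRing R] (n : ℕ) (τ : R) (g : ℤ → R)
    (hg0 : g 0 = -1)
    (hgper : ∀ k l : ℤ, (n : ℤ) ∣ (k - l) → g k = g l)
    (hginv : ∀ k : ℤ, ¬ (n : ℤ) ∣ k → g k * g (-k) = τ ^ 2)
    (Y : Type*) [AddCommGroup Y]
    (p : Y →+ ℤ)
    (ca : Y) (hca : p ca = 2)
    (ρ : Y) (hρ : p ρ = 1)
    (m : ℕ) (qa : ℤ)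
    (hm : IsLeast {m' : ℕ | 0 < m' ∧ (n : ℤ) ∣ (m' : ℤ) * qa} m)
    (T : (Y →₀ R) →ₗ[R] (Y →₀ R))
    (hTpos : ∀ lv : Y, 0 ≤ p lv →
      T (single lv 1) =
        g (p (lv + ρ) * qa) • single (lv - p (lv + ρ) • ca) 1 +
        (τ ^ 2 - 1) •
          ∑ k ∈ (Finset.Icc (0 : ℤ) (p lv)).filter (fun k => k * (m : ℤ) ≤ p lv),
            single (lv - (k * (m : ℤ)) • ca) 1)
    (hTneg : ∀ lv : Y, p lv < 0 →
      T (single lv 1) =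
        g (p (lv + ρ) * qa) • single (lv - p (lv + ρ) • ca) 1 +
        (1 - τ ^ 2) •
          ∑ k ∈ (Finset.Icc (0 : ℤ) (-(p lv))).filter
              (fun k => 0 < k ∧ k * (m : ℤ) < -(p lv)),
            single (lv + (k * (m : ℤ)) • ca) 1)
    (lv : Y) (hj1 : 0 < p (lv + ρ)) (hj2 : p (lv + ρ) < m) :
    T (single lv 1 - g (p (lv + ρ) * qa) • single (lv - p (lv + ρ) • ca) 1) =
      -(single lv 1 - g (p (lv + ρ) * qa) • single (lv - p (lv + ρ) • ca) 1) := by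
  set j := p (lv + ρ) with hj
  have hmpos : 0 < m := hm.1.1
  have hplv : p lv = j - 1 := by
    have : j = p lv + p ρ := by rw [hj, map_add]
    omega
  set μ := lv - j • ca with hμ
  have hpμ : p μ = -j - 1 := by
    rw [hμ, map_sub, map_zsmul, hca, hplv]; simp only [smul_eq_mul]; ring
  have hpμρ : p (μ + ρ) = -j := by rw [map_add, hpμ, hρ]; ring
  have hnd : ¬ (n : ℤ) ∣ j * qa := by
    intro hdvd
    have hjt : ((j.toNat : ℤ)) = j := Int.toNat_of_nonneg hj1.le
    have : m ≤ j.toNat := hm.2 ⟨by omega, by rw [hjt]; exact hdvd⟩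
    omega
  have hfilt1 : (Finset.Icc (0 : ℤ) (p lv)).filter (fun k => k * (m : ℤ) ≤ p lv) = {0} := by
    ext k
    simp only [Finset.mem_filter, Finset.mem_Icc, Finset.mem_singleton]
    constructor
    · rintro ⟨⟨h0, _⟩, hk⟩
      by_contra hne
      have h1 : 1 ≤ k := by omega
      have : (m : ℤ) ≤ k * m := le_mul_of_one_le_left (by positivity) h1
      omega
    · rintro rfl; omega
  have hfilt2 : (Finset.Icc (0 : ℤ) (-(p μ))).filter
      (fun k => 0 < k ∧ k * (m : ℤ) < -(p μ)) = ∅ := by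
    rw [Finset.filter_eq_empty_iff]
    rintro k hk ⟨hk0, hkm⟩
    have : (m : ℤ) ≤ k * m := le_mul_of_one_le_left (by positivity) hk0
    omega
  have hT1 : T (single lv 1) = g (j * qa) • single μ 1 + (τ ^ 2 - 1) • single lv 1 := by
    rw [hTpos lv (by omega), hfilt1, ← hj, Finset.sum_singleton]
    simp [hμ]
  have hT2 : T (single μ 1) = g (-(j * qa)) • single lv 1 := by
    rw [hTneg μ (by omega), hfilt2, hpμρ]
    have : μ - (-j) • ca = lv := by rw [hμ, neg_smul, sub_neg_eq_add, sub_add_cancel]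
    rw [this]
    have : -j * qa = -(j * qa) := by ring
    simp [this]
  have hgg : g (j * qa) * g (-(j * qa)) = τ ^ 2 := hginv _ hnd
  rw [map_sub, map_smul, hT1, hT2, smul_smul, hgg]
  rw [sub_smul]
  abel_nf
  module
end

section
/- Let a be a simple root with coroot ǎ, m = n(ǎ), and λ̌ ∈ Y with ⟨λ̌+ρ̌, a⟩ ≥ 0 and ⟨λ̌+ρ̌, a⟩ ≡ 0 (mod m). Then Y_λ̌ + Y_{λ̌•s_a} is an eigenvector of the metaplectic Demazure–Lusztig operator T̃_a with eigenvalue −1: (Y_λ̌ + Y_{λ̌•s_a}) · T̃_a = −(Y_λ̌ + Y_{λ̌•s_a}). -/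
open Finsupp

/-- If ⟨λ̌+ρ̌,a⟩ ≥ 0 and ⟨λ̌+ρ̌,a⟩ ≡ 0 mod n(ǎ), then Y_λ̌ + Y_{λ̌•s_a} is an
eigenvector of the metaplectic Demazure–Lusztig operator T̃_a with eigenvalue −1.
Setup as for the operator: `R` generic ring with τ and Gauss sums g (𝔤₀ = −1, period n,
𝔤_k𝔤_{−k} = τ² for k ≢ 0 mod n); `p λ̌ = ⟨λ̌,a⟩`, coroot `ca` with ⟨ǎ,a⟩ = 2, `ρ = ρ̌` with
⟨ρ̌,a⟩ = 1, `m = n(ǎ)` least positive with n ∣ m·Q(ǎ), `qa = Q(ǎ)`; dot action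
λ̌ • s_a = λ̌ − ⟨λ̌+ρ̌,a⟩ǎ; T̃_a acts by the explicit formulas. -/
theorem stmt_16
    (R : Type*) [CommRing R] (n : ℕ) (τ : R) (g : ℤ → R)
    (hg0 : g 0 = -1)
    (hgper : ∀ k l : ℤ, (n : ℤ) ∣ (k - l) → g k = g l)
    (hginv : ∀ k : ℤ, ¬ (n : ℤ) ∣ k → g k * g (-k) = τ ^ 2)
    (Y : Type*) [AddCommGroup Y]
    (p : Y →+ ℤ)
    (ca : Y) (hca : p ca = 2)
    (ρ : Y) (hρ : p ρ = 1)
    (m : ℕ) (qa : ℤ)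
    (hm : IsLeast {m' : ℕ | 0 < m' ∧ (n : ℤ) ∣ (m' : ℤ) * qa} m)
    (T : (Y →₀ R) →ₗ[R] (Y →₀ R))
    (hTpos : ∀ lv : Y, 0 ≤ p lv →
      T (single lv 1) =
        g (p (lv + ρ) * qa) • single (lv - p (lv + ρ) • ca) 1 +
        (τ ^ 2 - 1) •
          ∑ k ∈ (Finset.Icc (0 : ℤ) (p lv)).filter (fun k => k * (m : ℤ) ≤ p lv),
            single (lv - (k * (m : ℤ)) • ca) 1)
    (hTneg : ∀ lv : Y, p lv < 0 →
      T (single lv 1) =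
        g (p (lv + ρ) * qa) • single (lv - p (lv + ρ) • ca) 1 +
        (1 - τ ^ 2) •
          ∑ k ∈ (Finset.Icc (0 : ℤ) (-(p lv))).filter
              (fun k => 0 < k ∧ k * (m : ℤ) < -(p lv)),
            single (lv + (k * (m : ℤ)) • ca) 1)
    (lv : Y) (hj1 : 0 ≤ p (lv + ρ)) (hj2 : (m : ℤ) ∣ p (lv + ρ)) :
    T (single lv 1 + single (lv - p (lv + ρ) • ca) 1) =
      -(single lv 1 + single (lv - p (lv + ρ) • ca) 1) := by

  have hm0 : 0 < (m : ℤ) := by exact_mod_cast hm.1.1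
  have hm1 : 1 ≤ (m : ℤ) := hm0
  have hndvd : (n : ℤ) ∣ (m : ℤ) * qa := hm.1.2
  obtain ⟨d, hd⟩ := hj2
  set j := p (lv + ρ) with hjdef
  have hplv : p lv = j - 1 := by
    have : j = p lv + 1 := by rw [hjdef, map_add, hρ]
    omega
  have hgj : g (j * qa) = -1 := by
    have hdv : (n : ℤ) ∣ j * qa - 0 := by
      rw [sub_zero, hd, show (m : ℤ) * d * qa = d * ((m : ℤ) * qa) by ring]
      exact hndvd.mul_left d
    rw [hgper (j * qa) 0 hdv, hg0]
  have hgj' : g (-j * qa) = -1 := by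
    have hdv : (n : ℤ) ∣ -j * qa - 0 := by
      rw [sub_zero, hd, show -((m : ℤ) * d) * qa = -d * ((m : ℤ) * qa) by ring]
      exact hndvd.mul_left (-d)
    rw [hgper (-j * qa) 0 hdv, hg0]
  rcases eq_or_lt_of_le hj1 with h0 | hjpos
  · -- j = 0
    have hj0 : j = 0 := h0.symm
    have hlvμ : lv - j • ca = lv := by rw [hj0]; simp
    have hplv' : p lv < 0 := by omega
    have hT : T (single lv 1) = -single lv 1 := by
      rw [hTneg lv hplv']
      have hfilt : (Finset.Icc (0 : ℤ) (-(p lv))).filter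
          (fun k => 0 < k ∧ k * (m : ℤ) < -(p lv)) = ∅ := by
        apply Finset.filter_false_of_mem
        intro k hk
        simp only [Finset.mem_Icc] at hk
        rintro ⟨hk1, hk2⟩
        have : k ≤ k * (m : ℤ) := le_mul_of_one_le_right hk1.le hm1
        omega
      rw [hfilt, ← hjdef, hj0]
      simp [hg0]
    rw [hlvμ, map_add, hT]
    abel
  · -- j > 0
    have hd1 : 1 ≤ d := by nlinarith [hd]
    set μ := lv - j • ca with hμdef
    have hpμ : p μ = -j - 1 := by
      rw [hμdef, map_sub, map_zsmul, hca, hplv, smul_eq_mul]; ring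
    have hpμρ : p (μ + ρ) = -j := by rw [map_add, hρ, hpμ]; ring
    have hμback : μ - p (μ + ρ) • ca = lv := by
      rw [hpμρ, hμdef, neg_zsmul, sub_neg_eq_add, sub_add_cancel]
    have hTlv := hTpos lv (by omega)
    have hTμ := hTneg μ (by omega)
    have hμlv : μ - (-j) • ca = lv := by
      rw [hμdef, neg_zsmul, sub_neg_eq_add, sub_add_cancel]
    rw [hpμρ, hpμ, hμlv, hgj'] at hTμ
    rw [← hjdef, hplv, hgj] at hTlv
    rw [map_add, hTlv, hTμ]
    have hsum : ∑ k ∈ (Finset.Icc (0 : ℤ) (j - 1)).filter (fun k => k * (m : ℤ) ≤ j - 1),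
            single (lv - (k * (m : ℤ)) • ca) (1 : R)
        = ∑ k ∈ (Finset.Icc (0 : ℤ) (-(-j - 1))).filter
              (fun k => 0 < k ∧ k * (m : ℤ) < -(-j - 1)),
            single (μ + (k * (m : ℤ)) • ca) (1 : R) := by
      apply Finset.sum_nbij' (fun k => d - k) (fun k => d - k)
      · intro k hk
        simp only [Finset.mem_filter, Finset.mem_Icc] at hk ⊢
        obtain ⟨⟨hk0, hk1⟩, hk2⟩ := hk
        have hkd : k < d := by nlinarith [hd]
        have h1 : (d - k) * (m : ℤ) = j - k * m := by rw [hd]; ring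
        have h2 : 1 ≤ d - k := by omega
        have h3 : d - k ≤ (d - k) * (m : ℤ) := le_mul_of_one_le_right (by omega) hm1
        have h5 : 0 ≤ k * (m : ℤ) := mul_nonneg hk0 hm0.le
        refine ⟨⟨by omega, by omega⟩, by omega, by omega⟩
      · intro k hk
        simp only [Finset.mem_filter, Finset.mem_Icc] at hk ⊢
        obtain ⟨⟨hk0, hk1⟩, hk2, hk3⟩ := hk
        have hkd : k ≤ d := by nlinarith [hd]
        have h1 : (d - k) * (m : ℤ) = j - k * m := by rw [hd]; ring
        have h3 : d - k ≤ (d - k) * (m : ℤ) := le_mul_of_one_le_right (by omega) hm1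
        have h4 : (m : ℤ) ≤ k * m := le_mul_of_one_le_left (by positivity) hk2
        refine ⟨⟨by omega, by omega⟩, by omega⟩
      · intro k hk; ring
      · intro k hk; ring
      · intro k hk
        simp only [Finset.mem_filter, Finset.mem_Icc] at hk
        obtain ⟨⟨hk0, hk1⟩, hk2⟩ := hk
        congr 1
        have h1 : (d - k) * (m : ℤ) = j - k * m := by rw [hd]; ring
        rw [h1, hμdef, sub_smul]
        abel
    rw [hsum]
    module
end

section
/- Let (W,S) be a Coxeter system, J ⊂ S with ^J W the minimal-length representatives of W_J \ W, and N the right H-module ε_J^- H with basis N_σ = ε_J^- H_σ for σ ∈ ^J W. Then for σ ∈ ^J W and s ∈ S: N_σ H_s = N_{σs} if σs ∈ ^J W and σs > σ; N_σ H_s = N_{σs} + (τ − τ^{-1}) N_σ if σs ∈ ^J W and σs < σ; and N_σ H_s = −τ^{-1} N_σ if σs ∉ ^J W. -/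
/-- The parameter τ in ℤ[τ,τ⁻¹]. -/
noncomputable def τ : LaurentPolynomial ℤ := LaurentPolynomial.T 1

/-- The parameter τ⁻¹. -/
noncomputable def τi : LaurentPolynomial ℤ := LaurentPolynomial.T (-1)

/-!
Cases (1) and (2) are the Hecke relations `H_σ H_s = H_{σs}` for `σs > σ` and
`H_σ H_s = H_{σs} + (τ - τ⁻¹) H_σ` for `σs < σ`. In case (3) Deodhar's lemma gives `σs = s_j σ`
with `j ∈ J` and `ℓ(s_j σ) = ℓ(σ) + 1`, so `ε H_σ H_s = ε H_{s_j} H_σ = -τ⁻¹ ε H_σ`.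

Deodhar's lemma follows from the exchange property: if `ω` is a reduced word for `σ`, the left
descent `s_j` of `σ s` lies in the left inversion sequence of `ω s`; it is not in that of `ω`
because `s_j σ > σ`, so `s_j = σ s σ⁻¹`. The exchange property comes from Tits' sign action of `W`
on `W × {±1}`, in which `s_i` acts by `(t, z) ↦ (s_i t s_i, ±z)`, the sign flipping iff `t = s_i`:
a word `ω` multiplies `z` by `(-1)` to the number of occurrences of `t` in its right inversion
sequence, and the braid relations hold because `a ↦ s_{i'} (s_i s_{i'})^a` has period `m(i, i')`.
-/

open Finset

section SignedConj

variable {G : Type*} [Group G]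

lemma conj_eq_iff_eq_conj_inv {x t c : G} : x * t * x⁻¹ = c ↔ t = x⁻¹ * c * x := by
  constructor <;> rintro rfl <;> group

variable [DecidableEq G]

def signedConj (p : G) (x : G × ℤˣ) : G × ℤˣ :=
  (p * x.1 * p⁻¹, (if x.1 = p then -1 else 1) * x.2)

variable {p q : G}

lemma signedConj_involutive (hp : p * p = 1) : Function.Involutive (signedConj p) := by
  have hpinv : p⁻¹ = p := inv_eq_of_mul_eq_one_right hp
  rintro ⟨t, z⟩
  have hconj : p * t * p⁻¹ = p ↔ t = p := by rw [mul_inv_eq_iff_eq_mul, mul_right_inj]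
  simp only [signedConj, hconj, Prod.mk.injEq]
  refine ⟨by simp [hpinv, ← mul_assoc, hp, mul_assoc t], ?_⟩
  split_ifs <;> simp

def signedConjPerm (hp : p * p = 1) : Equiv.Perm (G × ℤˣ) := (signedConj_involutive hp).toPerm

lemma signedConjPerm_apply (hp : p * p = 1) (x : G × ℤˣ) :
    signedConjPerm hp x = signedConj p x := rfl

lemma signedConjPerm_mul_apply (hp : p * p = 1) (hq : q * q = 1) (t : G) (z : ℤˣ) :
    (signedConjPerm hp * signedConjPerm hq) (t, z) =
      (p * q * t * (p * q)⁻¹,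
        ((if t = q * (p * q) then -1 else 1) * if t = q then -1 else 1) * z) := by
  have hflip : q * t * q⁻¹ = p ↔ t = q * (p * q) := by
    rw [conj_eq_iff_eq_conj_inv, inv_eq_of_mul_eq_one_right hq, mul_assoc]
  simp only [Equiv.Perm.mul_apply, signedConjPerm_apply, signedConj, hflip]
  exact Prod.ext (by group) (mul_assoc _ _ _).symm

lemma signedConjPerm_mul_pow_apply (hp : p * p = 1) (hq : q * q = 1) (k : ℕ) (t : G) (z : ℤˣ) :
    ((signedConjPerm hp * signedConjPerm hq) ^ k) (t, z) =
      ((p * q) ^ k * t * ((p * q) ^ k)⁻¹,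
        (∏ a ∈ range (2 * k), if t = q * (p * q) ^ a then -1 else 1) * z) := by
  have hswap : (p * q)⁻¹ * q = q * (p * q) := by
    rw [mul_inv_rev, inv_eq_of_mul_eq_one_right hp, inv_eq_of_mul_eq_one_right hq, mul_assoc]
  have hshift (a : ℕ) (t : G) :
      p * q * t * (p * q)⁻¹ = q * (p * q) ^ a ↔ t = q * (p * q) ^ (a + 1 + 1) := by
    rw [conj_eq_iff_eq_conj_inv, ← mul_assoc (p * q)⁻¹, hswap,
      mul_assoc q, ← pow_succ', mul_assoc, ← pow_succ]
  induction k generalizing t z with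
  | zero => simp
  | succ k ih =>
    rw [pow_succ, Equiv.Perm.mul_apply, signedConjPerm_mul_apply, ih]
    refine Prod.ext ?_ ?_
    · simp only [pow_succ, mul_inv_rev, mul_assoc]
    · rw [Nat.mul_succ, prod_range_succ', prod_range_succ']
      simp only [hshift]
      simp only [zero_add, pow_one, pow_zero, mul_one, mul_assoc]

lemma signedConjPerm_mul_pow_eq_one (hp : p * p = 1) (hq : q * q = 1) {m : ℕ}
    (hm : (p * q) ^ m = 1) : (signedConjPerm hp * signedConjPerm hq) ^ m = 1 := by
  ext1 ⟨t, z⟩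
  have hperiodic : (∏ a ∈ range (2 * m), if t = q * (p * q) ^ a then (-1 : ℤˣ) else 1) = 1 := by
    simp only [two_mul, prod_range_add, pow_add, hm, one_mul, ← sq, Int.units_sq]
  rw [signedConjPerm_mul_pow_apply, hperiodic, hm]
  simp

end SignedConj

namespace CoxeterSystem

variable {B W : Type*} [Group W] {M : CoxeterMatrix B} (cs : CoxeterSystem M W)

section SignAction

variable [DecidableEq W]

lemma isLiftable_signedConjPerm :
    M.IsLiftable fun i ↦ signedConjPerm (cs.simple_mul_simple_self i) :=
  fun i i' ↦ signedConjPerm_mul_pow_eq_one _ _ (cs.simple_mul_simple_pow i i')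

def signAction : W →* Equiv.Perm (W × ℤˣ) := cs.lift ⟨_, cs.isLiftable_signedConjPerm⟩

lemma signAction_simple (i : B) :
    cs.signAction (cs.simple i) = signedConjPerm (cs.simple_mul_simple_self i) :=
  cs.lift_apply_simple cs.isLiftable_signedConjPerm i

lemma signAction_wordProd (ω : List B) (t : W) (z : ℤˣ) :
    cs.signAction (cs.wordProd ω) (t, z) =
      (cs.wordProd ω * t * (cs.wordProd ω)⁻¹, (-1) ^ (cs.rightInvSeq ω).count t * z) := by
  induction ω with
  | nil => simp
  | cons i ω ih =>
    have hflip : cs.wordProd ω * t * (cs.wordProd ω)⁻¹ = cs.simple i ↔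
        (cs.wordProd ω)⁻¹ * cs.simple i * cs.wordProd ω = t := by
      rw [conj_eq_iff_eq_conj_inv, eq_comm]
    rw [wordProd_cons, map_mul, Equiv.Perm.mul_apply, ih, signAction_simple,
      signedConjPerm_apply]
    refine Prod.ext (by simp only [signedConj, mul_inv_rev, mul_assoc]) ?_
    simp only [signedConj, hflip, rightInvSeq, List.count_cons, beq_iff_eq]
    split_ifs <;> simp [pow_succ, mul_comm]

def inversionSign (w t : W) : ℤˣ := (cs.signAction w (t, 1)).2

lemma inversionSign_wordProd (ω : List B) (t : W) :
    cs.inversionSign (cs.wordProd ω) t = (-1) ^ (cs.rightInvSeq ω).count t := by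
  simp [inversionSign, signAction_wordProd]

lemma signAction_apply (w t : W) (z : ℤˣ) :
    cs.signAction w (t, z) = (w * t * w⁻¹, cs.inversionSign w t * z) := by
  obtain ⟨ω, rfl⟩ := cs.wordProd_surjective w
  rw [signAction_wordProd, inversionSign_wordProd]

lemma inversionSign_mul (u v t : W) :
    cs.inversionSign (u * v) t = cs.inversionSign u (v * t * v⁻¹) * cs.inversionSign v t := by
  rw [inversionSign, map_mul, Equiv.Perm.mul_apply, signAction_apply, signAction_apply,
    mul_one]

lemma inversionSign_simple_self (i : B) : cs.inversionSign (cs.simple i) (cs.simple i) = -1 := by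
  simp [inversionSign, signAction_simple, signedConjPerm_apply, signedConj]

lemma mem_rightInvSeq_of_inversionSign_eq_neg_one {ω : List B} {t : W}
    (h : cs.inversionSign (cs.wordProd ω) t = -1) : t ∈ cs.rightInvSeq ω := by
  rw [← List.count_pos_iff, Nat.pos_iff_ne_zero]
  intro hcount
  rw [inversionSign_wordProd, hcount, pow_zero] at h
  exact absurd h (by decide)

lemma length_mul_lt_of_inversionSign_eq_neg_one {w t : W} (h : cs.inversionSign w t = -1) :
    cs.length (w * t) < cs.length w := by
  obtain ⟨ω, hω, rfl⟩ := cs.exists_isReduced w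
  exact (cs.isRightInversion_of_mem_rightInvSeq hω
    (cs.mem_rightInvSeq_of_inversionSign_eq_neg_one h)).2

lemma inversionSign_simple_of_isRightDescent {w : W} {i : B} (h : cs.IsRightDescent w i) :
    cs.inversionSign w (cs.simple i) = -1 := by
  refine (Int.units_eq_one_or _).resolve_left fun hsign ↦ h.not_gt ?_
  have hsign' : cs.inversionSign (w * cs.simple i) (cs.simple i) = -1 := by
    rw [inversionSign_mul, inversionSign_simple_self, simple_mul_simple_self, one_mul,
      inv_simple, hsign, one_mul]
  simpa using cs.length_mul_lt_of_inversionSign_eq_neg_one hsign'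

end SignAction

theorem simple_mem_rightInvSeq_of_isRightDescent {ω : List B} {i : B}
    (h : cs.IsRightDescent (cs.wordProd ω) i) : cs.simple i ∈ cs.rightInvSeq ω := by
  classical
  exact cs.mem_rightInvSeq_of_inversionSign_eq_neg_one
    (cs.inversionSign_simple_of_isRightDescent h)

theorem simple_mem_leftInvSeq_of_isLeftDescent {ω : List B} {i : B}
    (h : cs.IsLeftDescent (cs.wordProd ω) i) : cs.simple i ∈ cs.leftInvSeq ω := by
  have hrev : cs.simple i ∈ cs.rightInvSeq ω.reverse :=
    cs.simple_mem_rightInvSeq_of_isRightDescent (by rwa [wordProd_reverse, isRightDescent_inv_iff])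
  rwa [rightInvSeq_reverse, List.mem_reverse] at hrev

theorem simple_mul_eq_mul_simple_of_isLeftDescent {σ : W} {j k : B}
    (hσ : ¬cs.IsLeftDescent σ j) (h : cs.IsLeftDescent (σ * cs.simple k) j) :
    cs.simple j * σ = σ * cs.simple k := by
  obtain ⟨ω, hω, rfl⟩ := cs.exists_isReduced σ
  have hmem := cs.simple_mem_leftInvSeq_of_isLeftDescent (ω := ω.concat k)
    (by rwa [wordProd_concat])
  rw [leftInvSeq_concat, List.concat_eq_append, List.mem_append, List.mem_singleton] at hmem
  rcases hmem with hmem | heq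
  · exact absurd (cs.isLeftInversion_of_mem_leftInvSeq hω hmem).2 hσ
  · rw [heq]
    group

end CoxeterSystem

lemma τ_mul_τi : τ * τi = 1 := by
  rw [τ, τi, ← LaurentPolynomial.T_add, add_neg_cancel, LaurentPolynomial.T_zero]

lemma mul_self_eq_of_hecke_quadratic {A : Type*} [Ring A] [Algebra (LaurentPolynomial ℤ) A] {h : A}
    (hq : (h - algebraMap (LaurentPolynomial ℤ) A τ) * (h + algebraMap (LaurentPolynomial ℤ) A τi)
      = 0) :
    h * h = (τ - τi) • h + 1 := by
  rw [sub_mul, mul_add, mul_add, ← Algebra.commutes τi h, ← map_mul, τ_mul_τi, map_one,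
    sub_eq_zero] at hq
  rw [eq_sub_of_add_eq hq, Algebra.smul_def, map_sub, sub_mul]
  abel

lemma hecke_mul_simple_of_isRightDescent {B W : Type*} [Group W] {M : CoxeterMatrix B}
    (cs : CoxeterSystem M W) {A : Type*} [Ring A] [Algebra (LaurentPolynomial ℤ) A] {H : W → A}
    (hbraid : ∀ w w' : W, cs.length (w * w') = cs.length w + cs.length w' →
      H (w * w') = H w * H w')
    {i : B}
    (hquad : (H (cs.simple i) - algebraMap (LaurentPolynomial ℤ) A τ) *
        (H (cs.simple i) + algebraMap (LaurentPolynomial ℤ) A τi) = 0)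
    {w : W} (hw : cs.IsRightDescent w i) :
    H w * H (cs.simple i) = H (w * cs.simple i) + (τ - τi) • H w := by
  have hlen : cs.length (w * cs.simple i * cs.simple i) =
      cs.length (w * cs.simple i) + cs.length (cs.simple i) := by
    rw [cs.simple_mul_simple_cancel_right, cs.length_simple, cs.isRightDescent_iff.mp hw]
  have hsplit : H w = H (w * cs.simple i) * H (cs.simple i) := by
    rw [← hbraid _ _ hlen, cs.simple_mul_simple_cancel_right]
  rw [hsplit, mul_assoc, mul_self_eq_of_hecke_quadratic hquad, mul_add, mul_one, mul_smul_comm,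
    add_comm]

/-- In the right module N = ε_J⁻ H with basis N_σ = ε_J⁻ H_σ for
σ ∈ ^J W (minimal-length representatives of W_J\W), one has, for σ ∈ ^J W and s ∈ S:
N_σ H_s = N_{σs} if σs ∈ ^J W, σs > σ;
N_σ H_s = N_{σs} + (τ − τ⁻¹) N_σ if σs ∈ ^J W, σs < σ;
N_σ H_s = −τ⁻¹ N_σ if σs ∉ ^J W.
The antisymmetrizer property ε_J⁻ H_{s_j} = (−τ⁻¹) ε_J⁻ for j ∈ J is assumed, and
`σs ∈ ^J W` is expressed by the length characterization ℓ(s_j(σs)) > ℓ(σs) for j ∈ J. -/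
theorem stmt_19 {B W : Type*} [Group W] {M : CoxeterMatrix B} (cs : CoxeterSystem M W)
    (A : Type*) [Ring A] [Algebra (LaurentPolynomial ℤ) A]
    (H : W → A)
    (hbraid : ∀ w w' : W, cs.length (w * w') = cs.length w + cs.length w' →
      H (w * w') = H w * H w')
    (hquad : ∀ b : B,
      (H (cs.simple b) - algebraMap (LaurentPolynomial ℤ) A τ) *
        (H (cs.simple b) + algebraMap (LaurentPolynomial ℤ) A τi) = 0)
    (J : Set B)
    (ε : A)
    (hε : ∀ j ∈ J, ε * H (cs.simple j) = (-τi) • ε)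
    (σ : W)
    (hσ : ∀ j ∈ J, cs.length (cs.simple j * σ) > cs.length σ)
    (s : B) :
    ((∀ j ∈ J, cs.length (cs.simple j * (σ * cs.simple s)) > cs.length (σ * cs.simple s)) →
      cs.length (σ * cs.simple s) > cs.length σ →
      (ε * H σ) * H (cs.simple s) = ε * H (σ * cs.simple s)) ∧
    ((∀ j ∈ J, cs.length (cs.simple j * (σ * cs.simple s)) > cs.length (σ * cs.simple s)) →
      cs.length (σ * cs.simple s) < cs.length σ →
      (ε * H σ) * H (cs.simple s) =
        ε * H (σ * cs.simple s) + (τ - τi) • (ε * H σ)) ∧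
    (¬ (∀ j ∈ J, cs.length (cs.simple j * (σ * cs.simple s)) > cs.length (σ * cs.simple s)) →
      (ε * H σ) * H (cs.simple s) = (-τi) • (ε * H σ)) := by
  refine ⟨fun _ hgt ↦ ?_, fun _ hlt ↦ ?_, fun hnot ↦ ?_⟩
  · rw [mul_assoc, hbraid _ _ (by rw [cs.length_simple, cs.not_isRightDescent_iff.mp hgt.not_gt])]
  · rw [mul_assoc, hecke_mul_simple_of_isRightDescent cs hbraid (hquad s) hlt, mul_add,
      mul_smul_comm]
  · push Not at hnot
    obtain ⟨j, hj, hle⟩ := hnot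
    have hσj : ¬cs.IsLeftDescent σ j := (hσ j hj).not_gt
    have hswap : cs.simple j * σ = σ * cs.simple s :=
      cs.simple_mul_eq_mul_simple_of_isLeftDescent hσj (hle.lt_of_ne (cs.length_simple_mul_ne _ j))
    have hlen : cs.length (cs.simple j * σ) = cs.length (cs.simple j) + cs.length σ := by
      rw [cs.not_isLeftDescent_iff.mp hσj, cs.length_simple, add_comm]
    have hlen' : cs.length (σ * cs.simple s) = cs.length σ + cs.length (cs.simple s) := by
      rw [← hswap, hlen, add_comm, cs.length_simple, cs.length_simple]
    calc ε * H σ * H (cs.simple s) = ε * H (σ * cs.simple s) := by rw [mul_assoc, hbraid _ _ hlen']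
      _ = ε * H (cs.simple j) * H σ := by rw [← hswap, hbraid _ _ hlen, mul_assoc]
      _ = (-τi) • (ε * H σ) := by rw [hε j hj, smul_mul_assoc]
end
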